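/- arXiv:1410.5023 — 6 statements merged into one kernel-verified Lean document; each statement's English description precedes it below -/
import Mathlib

section
/- In the Hopf algebra QSym of quasisymmetric functions, the antipode acts on the monomial basis by S(M_α) = (-1)^{l(α)} · ∑_{β ≥ rev(α)} M_β, where the sum is over all compositions β that coarsen the reversal of α. -/
open TensorProduct

/-- The multiset of quasishuffles of two compositions: at each step either take
the first part of one of the two, or merge the two first parts into their sum. -/
def qshuffle : List ℕ → List ℕ → Multiset (List ℕ)
  | [], w => {w}
  | a :: v, [] => {a :: v}
  | a :: v, b :: w =>
      ((qshuffle v (b :: w)).map (a :: ·)) + ((qshuffle (a :: v) w).map (b :: ·)) +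
        ((qshuffle v w).map ((a + b) :: ·))
  termination_by v w => v.length + w.length
  decreasing_by all_goals (simp; try omega)

/-- The multiset of all coarsenings of a composition: each coarsening is
obtained by summing together adjacent parts.  Each coarsening appears exactly
once. -/
def coarsenings : List ℕ → Multiset (List ℕ)
  | [] => {[]}
  | [a] => {[a]}
  | a :: b :: t =>
      ((coarsenings (b :: t)).map (a :: ·)) + coarsenings ((a + b) :: t)
  termination_by l => l.length
  decreasing_by all_goals (simp; try omega)

lemma qshuffle_nil_right (v : List ℕ) : qshuffle v [] = {v} := by
  cases v <;> simp [qshuffle]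

/-- add `d` to the first part (or create it) -/
def addFirst (d : ℕ) : List ℕ → List ℕ
  | [] => [d]
  | g :: t => (d + g) :: t

lemma coarsenings_add_cons (d p : ℕ) (t : List ℕ) :
    coarsenings ((d + p) :: t) = (coarsenings (p :: t)).map (addFirst d) := by
  induction t generalizing p with
  | nil => simp [coarsenings, addFirst]
  | cons p' t ih =>
    rw [coarsenings]
    rw [coarsenings]
    rw [Multiset.map_add, Multiset.map_map, show d + p + p' = d + (p + p') by ring, ih]
    rfl

lemma coarsenings_cons (d p : ℕ) (t : List ℕ) :
    coarsenings (d :: p :: t) =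
      (coarsenings (p :: t)).map (d :: ·) + (coarsenings (p :: t)).map (addFirst d) := by
  rw [coarsenings, coarsenings_add_cons]

lemma coarsenings_ne_nil : ∀ (l : List ℕ), l ≠ [] → ∀ γ ∈ coarsenings l, γ ≠ [] := by
  intro l
  induction l using coarsenings.induct with
  | case1 => simp
  | case2 a => intro _ γ hγ; simp [coarsenings] at hγ; simp [hγ]
  | case3 a b t ih1 ih2 =>
    intro _ γ hγ
    rw [coarsenings] at hγ
    rw [Multiset.mem_add] at hγ
    rcases hγ with h | h
    · obtain ⟨x, _, rfl⟩ := Multiset.mem_map.mp h; simp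
    · exact ih2 (by simp) γ h

lemma coarsenings_pos : ∀ (l : List ℕ), (∀ i ∈ l, 0 < i) →
    ∀ γ ∈ coarsenings l, ∀ j ∈ γ, 0 < j := by
  intro l
  induction l using coarsenings.induct with
  | case1 => simp [coarsenings]
  | case2 a =>
    intro hl γ hγ
    simp only [coarsenings, Multiset.mem_singleton] at hγ
    subst hγ; simpa using hl
  | case3 a b t ih1 ih2 =>
    intro hl γ hγ
    rw [coarsenings] at hγ
    rw [Multiset.mem_add] at hγ
    rcases hγ with h | h
    · obtain ⟨x, hx, rfl⟩ := Multiset.mem_map.mp h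
      intro j hj
      rcases List.mem_cons.mp hj with rfl | hj
      · exact hl j (by simp)
      · exact ih1 (fun i hi => hl i (List.mem_cons_of_mem _ hi)) x hx j hj
    · refine ih2 ?_ γ h
      intro i hi
      rcases List.mem_cons.mp hi with rfl | hi
      · have := hl a (by simp); omega
      · exact hl i (by simp [hi])

/-- restricted quasishuffles: first part must come from `γ` alone -/
def Rm (γ δ : List ℕ) : Multiset (List ℕ) :=
  match γ with
  | [] => if δ = [] then {[]} else 0
  | g :: γ' => (qshuffle γ' δ).map (g :: ·)

lemma Rm_nil_right (γ : List ℕ) : Rm γ [] = {γ} := by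
  cases γ <;> simp [Rm, qshuffle_nil_right]

lemma qshuffle_split (g d : ℕ) (γ' δ : List ℕ) :
    qshuffle (g :: γ') (d :: δ) =
      Rm (g :: γ') (d :: δ) + Rm (d :: g :: γ') δ + Rm (addFirst d (g :: γ')) δ := by
  rw [qshuffle]
  rw [show Rm (g :: γ') (d :: δ) = (qshuffle γ' (d :: δ)).map (g :: ·) from rfl]
  rw [show Rm (d :: g :: γ') δ = (qshuffle (g :: γ') δ).map (d :: ·) from rfl]
  rw [show addFirst d (g :: γ') = (d + g) :: γ' from rfl]
  rw [show Rm ((d + g) :: γ') δ = (qshuffle γ' δ).map ((d + g) :: ·) from rfl]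
  rw [Nat.add_comm d g]

lemma keyF {A : Type} [AddCommGroup A] (f : List ℕ → A) :
    ∀ (δ π : List ℕ),
    ∑ i ∈ Finset.range (δ.length + 1),
      ((-1 : ℤ) ^ i) • (((coarsenings ((δ.take i).reverse ++ π)).map
        (fun γ => ((qshuffle γ (δ.drop i)).map f).sum)).sum)
    = ((coarsenings π).map (fun γ => ((Rm γ δ).map f).sum)).sum := by
  intro δ
  induction δ with
  | nil =>
    intro π
    simp [qshuffle_nil_right, Rm_nil_right]
  | cons d δ ih =>
    intro π
    rw [show (d :: δ).length + 1 = (δ.length + 1) + 1 from rfl, Finset.sum_range_succ']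
    have h1 : ∑ i ∈ Finset.range (δ.length + 1),
        ((-1 : ℤ) ^ (i+1)) • (((coarsenings (((d :: δ).take (i+1)).reverse ++ π)).map
          (fun γ => ((qshuffle γ ((d :: δ).drop (i+1))).map f).sum)).sum)
        = - ((coarsenings (d :: π)).map (fun γ => ((Rm γ δ).map f).sum)).sum := by
      rw [← ih (d :: π), ← Finset.sum_neg_distrib]
      refine Finset.sum_congr rfl (fun i _ => ?_)
      have : ((d :: δ).take (i + 1)).reverse ++ π = (δ.take i).reverse ++ (d :: π) := by
        simp
      rw [this, show (d :: δ).drop (i + 1) = δ.drop i from rfl, pow_succ, mul_neg_one,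
        neg_smul]
    rw [h1]
    simp only [List.take_zero, List.reverse_nil, List.nil_append, List.drop_zero, pow_zero,
      one_smul]
    cases π with
    | nil =>
      simp only [coarsenings, Multiset.map_singleton, Multiset.sum_singleton]
      rw [show Rm [] (d :: δ) = (0 : Multiset (List ℕ)) by simp [Rm]]
      rw [show Rm [d] δ = (qshuffle [] δ).map (d :: ·) from rfl]
      simp [qshuffle]
    | cons p t =>
      rw [coarsenings_cons, Multiset.map_add, Multiset.sum_add, Multiset.map_map,
        Multiset.map_map]
      have hpt : ∀ γ ∈ coarsenings (p :: t),
          ((qshuffle γ (d :: δ)).map f).sum =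
          (fun γ => ((Rm γ (d :: δ)).map f).sum + ((Rm (d :: γ) δ).map f).sum
            + ((Rm (addFirst d γ) δ).map f).sum) γ := by
        intro γ hγ
        obtain ⟨g, γ', rfl⟩ :=
          List.exists_cons_of_ne_nil (coarsenings_ne_nil _ (by simp) γ hγ)
        simp only [qshuffle_split, Multiset.map_add, Multiset.sum_add]
      rw [Multiset.map_congr rfl hpt]
      simp only [Function.comp]
      rw [Multiset.sum_map_add, Multiset.sum_map_add]
      abel

lemma antipode_one' (K H : Type) [CommSemiring K] [Semiring H] [HopfAlgebra K H] :
    HopfAlgebra.antipode (R := K) (1 : H) = 1 := by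
  have h := HopfAlgebra.mul_antipode_rTensor_comul_apply (R := K) (A := H) (1 : H)
  simpa [Algebra.TensorProduct.one_def] using h

/-- In the Hopf algebra `QSym` of quasisymmetric functions, the
antipode acts on the monomial basis by
`S(M_α) = (-1)^{l(α)} ∑_{β ≥ rev α} M_β`, the sum running over all coarsenings
`β` of the reversal of `α`.  `QSym` is formalized as a Hopf algebra `H` over a
field `K` with a basis-indexing map `M` on compositions (lists of positive
integers) satisfying the quasishuffle product rule, the deconcatenation
coproduct rule and the counit rule. -/
theorem qsym_monomial_antipode (K : Type) [Field K] (H : Type) [CommRing H]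
    [HopfAlgebra K H] (M : List ℕ → H)
    (hone : M [] = 1)
    (hmul : ∀ v w : List ℕ, (∀ i ∈ v, 0 < i) → (∀ i ∈ w, 0 < i) →
      M v * M w = ((qshuffle v w).map M).sum)
    (hcomul : ∀ α : List ℕ, (∀ i ∈ α, 0 < i) →
      Coalgebra.comul (R := K) (M α) =
        ∑ i ∈ Finset.range (α.length + 1), M (α.take i) ⊗ₜ[K] M (α.drop i))
    (hcounit : ∀ α : List ℕ, (∀ i ∈ α, 0 < i) →
      Coalgebra.counit (R := K) (M α) = if α = [] then (1 : K) else 0)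
    (α : List ℕ) (hα : ∀ i ∈ α, 0 < i) :
    HopfAlgebra.antipode (R := K) (M α) =
      ((-1 : ℤ) ^ α.length) • ((coarsenings α.reverse).map M).sum := by
  suffices h : ∀ n (α : List ℕ), α.length ≤ n → (∀ i ∈ α, 0 < i) →
      HopfAlgebra.antipode (R := K) (M α) =
        ((-1 : ℤ) ^ α.length) • ((coarsenings α.reverse).map M).sum from
    h α.length α le_rfl hα
  intro n
  induction n with
  | zero =>
    intro α hl _
    have : α = [] := List.length_eq_zero_iff.mp (Nat.le_zero.mp hl)
    subst this
    simp [coarsenings, hone, antipode_one' K H]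
  | succ n ih =>
    intro α hl hp
    rcases eq_or_ne α [] with rfl | hne
    · simp [coarsenings, hone, antipode_one' K H]
    · -- the convolution identity applied to `M α`
      have h1 : ∑ i ∈ Finset.range (α.length + 1),
          HopfAlgebra.antipode (R := K) (M (α.take i)) * M (α.drop i) = 0 := by
        have h2 := HopfAlgebra.mul_antipode_rTensor_comul_apply (R := K) (A := H) (M α)
        rw [hcomul α hp, hcounit α hp, if_neg hne, map_zero, map_sum, map_sum] at h2
        simpa using h2
      rw [Finset.sum_range_succ, List.take_length, List.drop_length, hone, mul_one] at h1
      have hanti : HopfAlgebra.antipode (R := K) (M α)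
          = - ∑ i ∈ Finset.range α.length,
              HopfAlgebra.antipode (R := K) (M (α.take i)) * M (α.drop i) :=
        eq_neg_of_add_eq_zero_right h1
      -- rewrite each summand with the inductive hypothesis and the product rule
      have hterm : ∀ i ∈ Finset.range α.length,
          HopfAlgebra.antipode (R := K) (M (α.take i)) * M (α.drop i)
          = ((-1 : ℤ) ^ i) • (((coarsenings ((α.take i).reverse)).map
              (fun γ => ((qshuffle γ (α.drop i)).map M).sum)).sum) := by
        intro i hi
        rw [Finset.mem_range] at hi
        have hlen : (α.take i).length = i := by
          rw [List.length_take]; omega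
        have hppre : ∀ j ∈ α.take i, 0 < j := fun j hj => hp j (List.mem_of_mem_take hj)
        have hih := ih (α.take i) (by omega) hppre
        rw [hih, hlen, smul_mul_assoc]
        congr 1
        rw [← Multiset.sum_map_mul_right]
        refine congrArg Multiset.sum (Multiset.map_congr rfl ?_)
        intro γ hγ
        exact hmul γ (α.drop i)
          (coarsenings_pos _ (fun j hj => hppre j (List.mem_reverse.mp hj)) γ hγ)
          (fun j hj => hp j (List.mem_of_mem_drop hj))
      rw [Finset.sum_congr rfl hterm] at hanti
      -- the combinatorial identity
      have hkey := keyF M α []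
      simp only [List.append_nil] at hkey
      simp only [coarsenings, Multiset.map_singleton, Multiset.sum_singleton] at hkey
      rw [show Rm [] α = (0 : Multiset (List ℕ)) by simp [Rm, hne], Multiset.map_zero,
        Multiset.sum_zero] at hkey
      rw [Finset.sum_range_succ, List.take_length, List.drop_length] at hkey
      have hlast : ((coarsenings α.reverse).map
          (fun γ => ((qshuffle γ ([] : List ℕ)).map M).sum)).sum
          = ((coarsenings α.reverse).map M).sum := by
        refine congrArg Multiset.sum (Multiset.map_congr rfl ?_)
        intro γ _
        simp [qshuffle_nil_right]
      rw [hlast] at hkey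
      rw [hanti]
      simp only [zsmul_eq_mul] at hkey ⊢
      push_cast at hkey ⊢
      linear_combination -hkey
end

section
/- In the incidence Hopf algebra on graphs, the antipode applied to (the isomorphism class of) a simple graph G on vertex set [n] is S(G) = ∑_{F flat of G} (-1)^{c(F)} · a(G/F) · F, where c(F) is the number of connected components of the flat F and a(G/F) is the number of acyclic orientations of the contraction G/F. -/
/-!
The antipode is determined by the recursion `∑_A S(b G[A]) · b G[Aᶜ] = ε(G)`, whose `A = V` term
is `S(b G)`. So it suffices, by induction on the number of vertices, to show that the flat
expansion `flatSum b` satisfies the same recursion. Expanding `flatSum b G[A] · b G[Aᶜ]`, a flat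
`Fl` of `G[A]` glued with `G[Aᶜ]` is a flat `F` of `G`; conversely `A` is recovered from `F`
and the set `B` of components of `F` lying outside `A`, which can be any independent set of
`G/F`. Contracting, `a(G[A]/F[A])` counts the acyclic orientations of `G/F` in which every
vertex of `B` is a source, so the coefficient of `F` is an alternating sum over sets of sources,
which vanishes because every acyclic orientation of a nonempty graph has a source.
-/

open TensorProduct

/-- The disjoint union of two simple graphs. -/
def disjUnion {V W : Type} (G : SimpleGraph V) (G' : SimpleGraph W) :
    SimpleGraph (V ⊕ W) where
  Adj a b := Sum.LiftRel G.Adj G'.Adj a b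
  symm := by
    constructor
    rintro a b (h | h)
    · exact Sum.LiftRel.inl h.symm
    · exact Sum.LiftRel.inr h.symm
  loopless := by
    constructor
    rintro a (h | h)
    · exact G.loopless.irrefl _ h
    · exact G'.loopless.irrefl _ h

/-- `Fl` is a flat of `G`: a spanning subgraph each of whose connected
components is an induced subgraph of `G`. -/
def IsFlat {V : Type} (G Fl : SimpleGraph V) : Prop :=
  Fl ≤ G ∧ ∀ u v, Fl.Reachable u v → G.Adj u v → Fl.Adj u v

/-- The contraction `G/Fl`: the graph whose vertices are the connected
components of `Fl`, with two distinct components adjacent when `G` has an edge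
between them. -/
def contract {V : Type} (G Fl : SimpleGraph V) :
    SimpleGraph Fl.ConnectedComponent where
  Adj c d := c ≠ d ∧ ∃ u v, Fl.connectedComponentMk u = c ∧
    Fl.connectedComponentMk v = d ∧ G.Adj u v
  symm := by
    constructor
    rintro c d ⟨hne, u, v, hu, hv, ha⟩
    exact ⟨hne.symm, v, u, hv, hu, ha.symm⟩
  loopless := by
    constructor
    rintro c ⟨hne, -⟩
    exact hne rfl

/-- An acyclic orientation of a simple graph `G`: a choice of direction `r` for
each edge of `G` creating no directed cycle. -/
structure AcyclicOrientation {V : Type} (G : SimpleGraph V) where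
  r : V → V → Prop
  le_adj : ∀ u v, r u v → G.Adj u v
  total : ∀ u v, G.Adj u v → r u v ∨ r v u
  acyclic : ∀ u, ¬ Relation.TransGen r u u

theorem Relation.TransGen.restrict {α : Type*} {r : α → α → Prop} {p : α → Prop}
    (hr : ∀ ⦃a b⦄, r a b → p b) {a b : α} (h : Relation.TransGen r a b) (ha : p a) (hb : p b) :
    Relation.TransGen (fun x y : Subtype p => r x y) ⟨a, ha⟩ ⟨b, hb⟩ := by
  induction h using Relation.TransGen.head_induction_on with
  | single hab => exact .single hab
  | head hac _ ih => exact .head hac (ih (hr hac))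

namespace AcyclicOrientation

variable {V W : Type} {G : SimpleGraph V} {G' : SimpleGraph W}

theorem ext {σ τ : AcyclicOrientation G} (h : σ.r = τ.r) : σ = τ := by
  cases σ; cases τ; cases h; rfl

instance [Finite V] : Finite (AcyclicOrientation G) :=
  Finite.of_injective r fun _ _ => ext

instance [IsEmpty V] : Unique (AcyclicOrientation G) where
  default := ⟨fun _ _ => False, fun u => isEmptyElim u, fun u => isEmptyElim u, isEmptyElim⟩
  uniq _ := ext <| funext isEmptyElim

def IsSource (σ : AcyclicOrientation G) (v : V) : Prop := ∀ u, ¬ σ.r u v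

theorem exists_isSource [Finite V] [Nonempty V] (σ : AcyclicOrientation G) :
    ∃ v, σ.IsSource v := by
  have : Std.Irrefl (Relation.TransGen σ.r) := ⟨σ.acyclic⟩
  obtain ⟨v, -, hv⟩ := (Finite.wellFounded_of_trans_of_irrefl (Relation.TransGen σ.r)).has_min
    Set.univ ⟨Classical.arbitrary V, trivial⟩
  exact ⟨v, fun u hu => hv u trivial (.single hu)⟩

def comap (f : G' ↪g G) (σ : AcyclicOrientation G) : AcyclicOrientation G' where
  r u v := σ.r (f u) (f v)
  le_adj _ _ h := f.map_rel_iff.mp (σ.le_adj _ _ h)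
  total _ _ h := σ.total _ _ (f.map_rel_iff.mpr h)
  acyclic u h := σ.acyclic (f u) (h.lift f fun _ _ => id)

def congr (e : G ≃g G') : AcyclicOrientation G ≃ AcyclicOrientation G' where
  toFun := comap e.symm.toEmbedding
  invFun := comap e.toEmbedding
  left_inv σ := ext <| by funext u v; simp [comap]
  right_inv σ := ext <| by funext u v; simp [comap]

variable {s : Set V}

def extendRel (τ : AcyclicOrientation (G.induce s)) (a b : V) : Prop :=
  (∃ (ha : a ∈ s) (hb : b ∈ s), τ.r ⟨a, ha⟩ ⟨b, hb⟩) ∨ (a ∉ s ∧ G.Adj a b)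

theorem mem_of_extendRel (hs : ∀ ⦃u v⦄, u ∉ s → v ∉ s → ¬ G.Adj u v)
    {τ : AcyclicOrientation (G.induce s)} ⦃a b : V⦄ (h : extendRel τ a b) : b ∈ s := by
  rcases h with ⟨-, hb, -⟩ | ⟨ha, h⟩
  · exact hb
  · exact by_contra fun hb => hs ha hb h

/-- Edges leaving `s` are directed away from the complement of `s`; since the complement is
independent, no directed cycle passes through it. -/
def extend (hs : ∀ ⦃u v⦄, u ∉ s → v ∉ s → ¬ G.Adj u v)
    (τ : AcyclicOrientation (G.induce s)) : AcyclicOrientation G where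
  r := extendRel τ
  le_adj := by
    rintro a b (⟨_, _, h⟩ | ⟨_, h⟩)
    exacts [τ.le_adj _ _ h, h]
  total a b h := by
    by_cases ha : a ∈ s <;> by_cases hb : b ∈ s
    · rcases τ.total ⟨a, ha⟩ ⟨b, hb⟩ h with h | h
      exacts [.inl (.inl ⟨ha, hb, h⟩), .inr (.inl ⟨hb, ha, h⟩)]
    · exact .inr (.inr ⟨hb, h.symm⟩)
    · exact .inl (.inr ⟨ha, h⟩)
    · exact (hs ha hb h).elim
  acyclic u h := by
    obtain ⟨_, -, hlast⟩ := Relation.TransGen.tail'_iff.mp h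
    have hu := mem_of_extendRel hs hlast
    refine τ.acyclic ⟨u, hu⟩
      (Relation.TransGen.mono ?_ _ _ (h.restrict (mem_of_extendRel hs) hu hu))
    rintro x y (⟨_, _, hxy⟩ | ⟨hx, -⟩)
    exacts [hxy, (hx x.2).elim]

def extendEquiv (hs : ∀ ⦃u v⦄, u ∉ s → v ∉ s → ¬ G.Adj u v) :
    AcyclicOrientation (G.induce s) ≃ {σ : AcyclicOrientation G // ∀ v ∉ s, σ.IsSource v} where
  toFun τ := ⟨extend hs τ, fun v hv u h => hv (mem_of_extendRel hs h)⟩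
  invFun σ := comap (SimpleGraph.Embedding.induce s) σ.1
  left_inv τ := ext <| by
    funext a b
    simp [comap, extend, extendRel]
  right_inv := by
    rintro ⟨σ, hσ⟩
    refine Subtype.ext <| ext <| funext₂ fun a b => propext ⟨?_, fun h => ?_⟩
    · rintro (⟨_, _, h⟩ | ⟨ha, h⟩)
      · exact h
      · exact (σ.total a b h).resolve_right (hσ a ha b)
    · have hb : b ∈ s := by_contra fun hb => hσ b hb a h
      by_cases ha : a ∈ s
      exacts [.inl ⟨ha, hb, h⟩, .inr ⟨ha, σ.le_adj a b h⟩]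

theorem not_isSource_and_isSource (σ : AcyclicOrientation G) {c d : V} (h : G.Adj c d) :
    ¬ (σ.IsSource c ∧ σ.IsSource d) :=
  fun ⟨hc, hd⟩ => (σ.total c d h).elim (hd c) (hc d)

theorem sum_neg_one_pow_mul_card_isSource {W : Type} [Fintype W] [Nonempty W]
    (Γ : SimpleGraph W) :
    ∑ B : Finset W, (-1 : ℤ) ^ B.card *
      Nat.card {σ : AcyclicOrientation Γ // ∀ c ∈ B, σ.IsSource c} = 0 := by
  classical
  have : Fintype (AcyclicOrientation Γ) := .ofFinite _
  have hcount (B : Finset W) :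
      (Nat.card {σ : AcyclicOrientation Γ // ∀ c ∈ B, σ.IsSource c} : ℤ) =
        ∑ σ : AcyclicOrientation Γ,
          if B ∈ (Finset.univ.filter σ.IsSource).powerset then 1 else 0 := by
    simp [Nat.card_eq_fintype_card, Fintype.card_subtype, Finset.subset_iff]
  -- each orientation is counted with total weight `∑_{B ⊆ sources} (-1)^|B| = 0`
  simp_rw [hcount, Finset.mul_sum, mul_ite, mul_one, mul_zero]
  rw [Finset.sum_comm]
  refine Finset.sum_eq_zero fun σ _ => ?_
  rw [Finset.sum_ite_mem, Finset.univ_inter]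
  obtain ⟨v, hv⟩ := σ.exists_isSource
  exact Finset.sum_powerset_neg_one_pow_card_of_nonempty ⟨v, by simpa using hv⟩

end AcyclicOrientation

theorem contract_adj {V : Type} {G F : SimpleGraph V} {c d : F.ConnectedComponent} :
    (contract G F).Adj c d ↔ c ≠ d ∧ ∃ u v, F.connectedComponentMk u = c ∧
      F.connectedComponentMk v = d ∧ G.Adj u v :=
  Iff.rfl

theorem disjUnion_eq_sum {V W : Type} (G : SimpleGraph V) (G' : SimpleGraph W) :
    disjUnion G G' = G ⊕g G' := by
  ext (a | a) (b | b) <;> simp [disjUnion]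

namespace SimpleGraph

variable {V : Type} {F G : SimpleGraph V} {A : Set V}

theorem mem_of_reachable (hA : ∀ ⦃u v⦄, F.Adj u v → u ∈ A → v ∈ A) {u v : V}
    (h : F.Reachable u v) (hu : u ∈ A) : v ∈ A := by
  rw [reachable_iff_reflTransGen] at h
  induction h with
  | refl => exact hu
  | tail _ hvw ih => exact hA hvw ih

theorem reachable_induce_iff (hA : ∀ ⦃u v⦄, F.Adj u v → u ∈ A → v ∈ A) {a b : A} :
    (F.induce A).Reachable a b ↔ F.Reachable a b :=
  ⟨fun h => h.map (Embedding.induce A).toHom, fun ⟨p⟩ => by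
    classical
    exact ⟨p.induce A fun _ hx => mem_of_reachable hA (p.takeUntil _ hx).reachable a.2⟩⟩

noncomputable def induceComponentsEquiv (hA : ∀ ⦃u v⦄, F.Adj u v → u ∈ A → v ∈ A) :
    (F.induce A).ConnectedComponent ≃ F.connectedComponentMk '' A :=
  .trans (.ofInjective (ConnectedComponent.map (Embedding.induce A).toHom) <|
      ConnectedComponent.ind₂ fun a b h => by
        simpa [ConnectedComponent.eq, reachable_induce_iff hA] using h) <|
    .setCongr <| Set.ext fun c => by
      constructor
      · rintro ⟨d, rfl⟩
        induction d using ConnectedComponent.ind with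
        | h a => exact ⟨a, a.2, rfl⟩
      · rintro ⟨a, ha, rfl⟩
        exact ⟨F.induce A |>.connectedComponentMk ⟨a, ha⟩, rfl⟩

theorem induceComponentsEquiv_mk (hA : ∀ ⦃u v⦄, F.Adj u v → u ∈ A → v ∈ A) (a : A) :
    (induceComponentsEquiv hA ((F.induce A).connectedComponentMk a) : F.ConnectedComponent) =
      F.connectedComponentMk a :=
  rfl

theorem card_connectedComponent_eq_card_induce_add [Finite V]
    (hA : ∀ ⦃u v⦄, F.Adj u v → u ∈ A → v ∈ A) :
    Nat.card F.ConnectedComponent =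
      Nat.card (F.induce A).ConnectedComponent + Nat.card ↥(F.connectedComponentMk '' A)ᶜ := by
  classical
  rw [Nat.card_congr (induceComponentsEquiv hA), ← Nat.card_sum,
    Nat.card_congr (Equiv.Set.sumCompl _)]

noncomputable def contractInduceIso (hA : ∀ ⦃u v⦄, F.Adj u v → u ∈ A → v ∈ A) :
    contract (G.induce A) (F.induce A) ≃g (contract G F).induce (F.connectedComponentMk '' A) where
  toEquiv := induceComponentsEquiv hA
  map_rel_iff' {c d} := by
    induction c, d using ConnectedComponent.ind₂ with
    | h a b =>
      simp only [comap_adj, Function.Embedding.coe_subtype, contract_adj,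
        induceComponentsEquiv_mk, ne_eq, ConnectedComponent.eq, reachable_induce_iff hA,
        Subtype.exists]
      refine and_congr_right fun _ => ⟨?_, ?_⟩
      · rintro ⟨u, v, hu, hv, huv⟩
        exact ⟨u, mem_of_reachable hA hu.symm a.2, v, mem_of_reachable hA hv.symm b.2, hu, hv, huv⟩
      · rintro ⟨u, -, v, -, huv⟩
        exact ⟨u, v, huv⟩

theorem card_acyclicOrientation_contract_induce (hA : ∀ ⦃u v⦄, F.Adj u v → u ∈ A → v ∈ A)
    (hout : ∀ ⦃u v⦄, u ∉ A → v ∉ A → G.Adj u v → F.Adj u v) :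
    Nat.card (AcyclicOrientation (contract (G.induce A) (F.induce A))) =
      Nat.card {σ : AcyclicOrientation (contract G F) //
        ∀ c ∉ F.connectedComponentMk '' A, σ.IsSource c} := by
  have hindep : ∀ ⦃c d⦄, c ∉ F.connectedComponentMk '' A → d ∉ F.connectedComponentMk '' A →
      ¬ (contract G F).Adj c d := by
    rintro _ _ hc hd ⟨hne, u, v, rfl, rfl, huv⟩
    have hu : u ∉ A := fun hu => hc ⟨u, hu, rfl⟩
    have hv : v ∉ A := fun hv => hd ⟨v, hv, rfl⟩
    exact hne (ConnectedComponent.connectedComponentMk_eq_of_adj (hout hu hv huv))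
  exact Nat.card_congr <| (AcyclicOrientation.congr (contractInduceIso hA)).trans
    (AcyclicOrientation.extendEquiv hindep)

theorem _root_.IsFlat.induce (hF : IsFlat G F) (hA : ∀ ⦃u v⦄, F.Adj u v → u ∈ A → v ∈ A) :
    IsFlat (G.induce A) (F.induce A) :=
  ⟨fun _ _ h => hF.1 h, fun _ _ hr h => hF.2 _ _ ((reachable_induce_iff hA).mp hr) h⟩

def glue (G : SimpleGraph V) (A : Set V) (Fl : SimpleGraph A) : SimpleGraph V where
  Adj u v := (∃ (hu : u ∈ A) (hv : v ∈ A), Fl.Adj ⟨u, hu⟩ ⟨v, hv⟩) ∨ (u ∉ A ∧ v ∉ A ∧ G.Adj u v)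
  symm := ⟨by
    rintro u v (⟨hu, hv, h⟩ | ⟨hu, hv, h⟩)
    exacts [.inl ⟨hv, hu, h.symm⟩, .inr ⟨hv, hu, h.symm⟩]⟩
  loopless := ⟨by
    rintro u (⟨_, _, h⟩ | ⟨_, _, h⟩)
    exacts [Fl.loopless.irrefl _ h, G.loopless.irrefl _ h]⟩

variable {Fl : SimpleGraph A}

theorem mem_of_glue_adj ⦃u v : V⦄ (h : (glue G A Fl).Adj u v) (hu : u ∈ A) : v ∈ A := by
  rcases h with ⟨_, hv, _⟩ | ⟨hu', _⟩
  exacts [hv, (hu' hu).elim]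

theorem glue_adj_of_notMem ⦃u v : V⦄ (hu : u ∉ A) (hv : v ∉ A) (h : G.Adj u v) :
    (glue G A Fl).Adj u v :=
  .inr ⟨hu, hv, h⟩

@[simp]
theorem induce_glue : (glue G A Fl).induce A = Fl := by
  ext a b
  exact ⟨by rintro (⟨_, _, h⟩ | ⟨ha, -⟩); exacts [h, (ha a.2).elim], fun h => .inl ⟨a.2, b.2, h⟩⟩

theorem glue_induce (hFG : F ≤ G) (hA : ∀ ⦃u v⦄, F.Adj u v → u ∈ A → v ∈ A)
    (hout : ∀ ⦃u v⦄, u ∉ A → v ∉ A → G.Adj u v → F.Adj u v) :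
    glue G A (F.induce A) = F := by
  ext u v
  refine ⟨by rintro (⟨_, _, h⟩ | ⟨hu, hv, h⟩); exacts [h, hout hu hv h], fun h => ?_⟩
  by_cases hu : u ∈ A
  · exact .inl ⟨hu, hA h hu, h⟩
  · exact .inr ⟨hu, fun hv => hu (hA h.symm hv), hFG h⟩

theorem glue_induce_eq_iff (hFG : F ≤ G) :
    glue G A (F.induce A) = F ↔ (∀ ⦃u v⦄, F.Adj u v → u ∈ A → v ∈ A) ∧
      ∀ ⦃u v⦄, u ∉ A → v ∉ A → G.Adj u v → F.Adj u v := by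
  refine ⟨fun h => ⟨fun u v huv => ?_, fun u v hu hv huv => ?_⟩, fun h => glue_induce hFG h.1 h.2⟩
  · rw [← h] at huv
    exact mem_of_glue_adj huv
  · rw [← h]
    exact glue_adj_of_notMem hu hv huv

theorem isFlat_glue_iff : IsFlat G (glue G A Fl) ↔ IsFlat (G.induce A) Fl := by
  refine ⟨fun h => by simpa using IsFlat.induce h mem_of_glue_adj, fun h => ⟨?_, ?_⟩⟩
  · rintro u v (⟨_, _, huv⟩ | ⟨_, _, huv⟩)
    exacts [h.1 huv, huv]
  · intro u v hr huv
    by_cases hu : u ∈ A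
    · have hv := mem_of_reachable mem_of_glue_adj hr hu
      have hr' : Fl.Reachable ⟨u, hu⟩ ⟨v, hv⟩ := by
        simpa using (reachable_induce_iff (A := A) mem_of_glue_adj).mpr hr
      exact .inl ⟨hu, hv, h.2 _ _ hr' huv⟩
    · exact .inr ⟨hu, fun hv => hu (mem_of_reachable mem_of_glue_adj hr.symm hv), huv⟩

def sumInduceComplIsoGlue [DecidablePred (· ∈ A)] :
    Fl ⊕g G.induce Aᶜ ≃g glue G A Fl where
  toEquiv := Equiv.sumCompl (· ∈ A)
  map_rel_iff' {a b} := by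
    rcases a with ⟨a, ha⟩ | ⟨a, ha : a ∉ A⟩ <;> rcases b with ⟨b, hb⟩ | ⟨b, hb : b ∉ A⟩ <;>
      simp_all [Equiv.sumCompl, glue]

def Iso.ofIsEmpty {W : Type} [IsEmpty V] [IsEmpty W] (G' : SimpleGraph W) : G ≃g G' :=
  ⟨Equiv.equivOfIsEmpty V W, fun {a} => isEmptyElim a⟩

end SimpleGraph

noncomputable def flatCoeff {V : Type} (G F : SimpleGraph V) : ℤ :=
  (-1) ^ Nat.card F.ConnectedComponent * Nat.card (AcyclicOrientation (contract G F))

namespace SimpleGraph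

open Finset
open scoped Classical

variable {V : Type} [Fintype V] {F G : SimpleGraph V}

theorem flatCoeff_induce [DecidableEq V] (A : Finset V)
    (hA : ∀ ⦃u v⦄, F.Adj u v → u ∈ A → v ∈ A)
    (hout : ∀ ⦃u v⦄, u ∉ A → v ∉ A → G.Adj u v → F.Adj u v) :
    flatCoeff (G.induce A) (F.induce A) =
      (-1) ^ (Nat.card F.ConnectedComponent + #(A.image F.connectedComponentMk)ᶜ) *
        Nat.card {σ : AcyclicOrientation (contract G F) //
          ∀ c ∈ (A.image F.connectedComponentMk)ᶜ, σ.IsSource c} := by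
  have hcard := card_connectedComponent_eq_card_induce_add (A := (A : Set V)) hA
  rw [← coe_image, ← coe_compl, Nat.card_eq_card_toFinset, toFinset_coe] at hcard
  have hsources := card_acyclicOrientation_contract_induce (A := (A : Set V)) (G := G) hA hout
  rw [← coe_image] at hsources
  simp only [flatCoeff, hcard, hsources, mem_compl, mem_coe]
  rw [add_assoc, ← two_mul, pow_add, pow_mul, neg_one_sq, one_pow, mul_one]

theorem isIndepSet_compl_image_connectedComponentMk {A : Finset V}
    (hout : ∀ ⦃u v⦄, u ∉ A → v ∉ A → G.Adj u v → F.Adj u v) :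
    (contract G F).IsIndepSet ↑(A.image F.connectedComponentMk)ᶜ := by
  rintro _ hc _ hd - ⟨hne, u, v, rfl, rfl, huv⟩
  simp only [coe_compl, coe_image, Set.mem_compl_iff, Set.mem_image, mem_coe, not_exists,
    not_and] at hc hd
  exact hne (ConnectedComponent.connectedComponentMk_eq_of_adj
    (hout (fun hu => hc u hu rfl) (fun hv => hd v hv rfl) huv))

theorem glue_induce_filter_notMem (hF : IsFlat G F) {B : Finset F.ConnectedComponent}
    (hB : (contract G F).IsIndepSet ↑B) :
    let A : Finset V := univ.filter (F.connectedComponentMk · ∉ B)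
    glue G A (F.induce A) = F := by
  refine (glue_induce_eq_iff hF.1).mpr ⟨fun u v huv => ?_, fun u v hu hv huv => ?_⟩
  · simp [ConnectedComponent.connectedComponentMk_eq_of_adj huv]
  · simp only [coe_filter, mem_univ, true_and, Set.mem_ofPred_eq, not_not] at hu hv
    by_cases h : F.connectedComponentMk u = F.connectedComponentMk v
    · exact hF.2 u v (ConnectedComponent.exact h) huv
    · exact (hB hu hv h ⟨h, u, v, rfl, rfl, huv⟩).elim

theorem sum_glue_induce_eq_sum_isIndepSet {M : Type} [AddCommMonoid M] (hF : IsFlat G F)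
    (f : Finset F.ConnectedComponent → M) :
    ∑ A ∈ univ.filter (fun A : Finset V => glue G A (F.induce A) = F),
        f (A.image F.connectedComponentMk)ᶜ =
      ∑ B ∈ univ.filter (fun B : Finset F.ConnectedComponent => (contract G F).IsIndepSet ↑B),
        f B := by
  refine sum_nbij' (fun A => (A.image F.connectedComponentMk)ᶜ)
    (fun B => univ.filter (F.connectedComponentMk · ∉ B)) (fun A hA => ?_)
    (fun B hB => ?_) (fun A hA => ?_) (fun B _ => ?_) (fun _ _ => rfl)
  · have := (glue_induce_eq_iff hF.1).mp (mem_filter.mp hA).2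
    exact mem_filter.mpr ⟨mem_univ _, isIndepSet_compl_image_connectedComponentMk this.2⟩
  · exact mem_filter.mpr ⟨mem_univ _, glue_induce_filter_notMem hF (mem_filter.mp hB).2⟩
  · have hA := ((glue_induce_eq_iff hF.1).mp (mem_filter.mp hA).2).1
    ext v
    simp only [mem_filter, mem_univ, mem_compl, mem_image, not_not, true_and,
      ConnectedComponent.eq]
    exact ⟨fun ⟨u, hu, huv⟩ => mem_of_reachable hA huv hu, fun hv => ⟨v, hv, .rfl⟩⟩
  · ext d
    induction d using ConnectedComponent.ind with
    | h v =>
      simp only [mem_compl, mem_image, mem_filter, mem_univ, true_and, not_exists, not_and,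
        ConnectedComponent.eq]
      exact ⟨fun h => by_contra fun hv => h v hv .rfl,
        fun hv u hu huv => hu (ConnectedComponent.sound huv ▸ hv)⟩

theorem sum_flatCoeff_induce_eq_zero [Nonempty V] (hF : IsFlat G F) :
    ∑ A ∈ univ.filter (fun A : Finset V => glue G A (F.induce A) = F),
      flatCoeff (G.induce A) (F.induce A) = 0 := by
  let N (B : Finset F.ConnectedComponent) : ℤ :=
    Nat.card {σ : AcyclicOrientation (contract G F) // ∀ c ∈ B, σ.IsSource c}
  have hindep_of_ne_zero : ∀ B, N B ≠ 0 → (contract G F).IsIndepSet ↑B := by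
    intro B hB u hu v hv _ hadj
    obtain ⟨σ, hσ⟩ : Nonempty {σ : AcyclicOrientation (contract G F) //
        ∀ c ∈ B, σ.IsSource c} := by
      by_contra h
      simp [N, not_nonempty_iff.mp h] at hB
    exact σ.not_isSource_and_isSource hadj ⟨hσ u hu, hσ v hv⟩
  calc _ = ∑ A ∈ univ.filter (fun A : Finset V => glue G A (F.induce A) = F),
        (-1) ^ (Nat.card F.ConnectedComponent + #(A.image F.connectedComponentMk)ᶜ) *
          N (A.image F.connectedComponentMk)ᶜ :=
        sum_congr rfl fun A hA => by
          have := (glue_induce_eq_iff hF.1).mp (mem_filter.mp hA).2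
          exact flatCoeff_induce A this.1 this.2
    _ = ∑ B, (-1) ^ (Nat.card F.ConnectedComponent + #B) * N B := by
        rw [sum_glue_induce_eq_sum_isIndepSet hF
          fun B => (-1) ^ (Nat.card F.ConnectedComponent + #B) * N B]
        exact sum_filter_of_ne fun B _ hB => hindep_of_ne_zero B (right_ne_zero_of_mul hB)
    _ = (-1) ^ Nat.card F.ConnectedComponent * ∑ B, (-1) ^ #B * N B := by
        simp only [pow_add, mul_sum, mul_assoc]
    _ = 0 := by
        rw [AcyclicOrientation.sum_neg_one_pow_mul_card_isSource, mul_zero]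

theorem sum_isFlat_induce [DecidableEq V] {M : Type} [AddCommMonoid M] (A : Finset V)
    (φ : SimpleGraph A → SimpleGraph V → M) :
    ∑ Fl ∈ univ.filter (IsFlat (G.induce A)), φ Fl (glue G A Fl) =
      ∑ F ∈ univ.filter (fun F => IsFlat G F ∧ glue G A (F.induce A) = F), φ (F.induce A) F := by
  refine sum_nbij' (glue G A) (·.induce A) (fun Fl hFl => ?_) (fun F hF => ?_)
    (fun _ _ => induce_glue) (fun F hF => (mem_filter.mp hF).2.2) (fun _ _ => by rw [induce_glue])
  · simpa [isFlat_glue_iff] using hFl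
  · obtain ⟨hF, hglue⟩ := (mem_filter.mp hF).2
    rw [← hglue, isFlat_glue_iff] at hF
    simpa using hF

end SimpleGraph

structure IsGraphIncidenceMap (K : Type) [Field K] {H : Type} [CommRing H] [HopfAlgebra K H]
    (b : ∀ {V : Type} [Fintype V] [DecidableEq V], SimpleGraph V → H) : Prop where
  map_iso : ∀ {V W : Type} [Fintype V] [DecidableEq V] [Fintype W]
      [DecidableEq W] (G : SimpleGraph V) (G' : SimpleGraph W),
      Nonempty (G ≃g G') → b G = b G'
  map_disjUnion : ∀ {V W : Type} [Fintype V] [DecidableEq V] [Fintype W]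
      [DecidableEq W] (G : SimpleGraph V) (G' : SimpleGraph W),
      b (disjUnion G G') = b G * b G'
  comul_eq : ∀ {V : Type} [Fintype V] [DecidableEq V] (G : SimpleGraph V),
      Coalgebra.comul (R := K) (b G) =
        ∑ A : Finset V,
          b (SimpleGraph.induce (↑A : Set V) G) ⊗ₜ[K]
            b (SimpleGraph.induce (↑(Aᶜ : Finset V) : Set V) G)
  counit_eq : ∀ {V : Type} [Fintype V] [DecidableEq V] (G : SimpleGraph V),
      Coalgebra.counit (R := K) (b G) =
        if Fintype.card V = 0 then (1 : K) else 0

namespace IsGraphIncidenceMap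

open SimpleGraph Finset

variable {K : Type} [Field K] {H : Type} [CommRing H] [HopfAlgebra K H]
  {b : ∀ {V : Type} [Fintype V] [DecidableEq V], SimpleGraph V → H}
  {V : Type} [Fintype V] [DecidableEq V]

theorem sum_antipode_mul (hb : IsGraphIncidenceMap K b) (G : SimpleGraph V) :
    ∑ A : Finset V, HopfAlgebra.antipode K (b (G.induce A)) * b (G.induce ↑Aᶜ) =
      algebraMap K H (if Fintype.card V = 0 then 1 else 0) := by
  have h := HopfAlgebra.mul_antipode_rTensor_comul_apply (R := K) (b G)
  simpa [hb.comul_eq, hb.counit_eq] using h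

theorem eq_one_of_isEmpty (hb : IsGraphIncidenceMap K b) [IsEmpty V] (G : SimpleGraph V) :
    b G = 1 := by
  have hgrouplike : IsGroupLikeElem K (b G) := by
    refine ⟨by simp [hb.counit_eq], ?_⟩
    rw [hb.comul_eq, Fintype.sum_unique, hb.map_iso _ G ⟨.ofIsEmpty G⟩,
      hb.map_iso (G.induce _) G ⟨.ofIsEmpty G⟩]
  have hidem : b G * b G = b G := by
    rw [← hb.map_disjUnion, hb.map_iso _ G ⟨.ofIsEmpty G⟩]
  exact hgrouplike.isUnit.mul_eq_left.mp hidem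

theorem mul_induce_compl (hb : IsGraphIncidenceMap K b) (G : SimpleGraph V) (A : Finset V)
    (Fl : SimpleGraph A) :
    b Fl * b (G.induce ↑Aᶜ) = b (glue G A Fl) := by
  rw [← hb.map_disjUnion, disjUnion_eq_sum]
  refine hb.map_iso _ _ ⟨.comp sumInduceComplIsoGlue (.sumCongr .refl (Iso.refl.induce ?_))⟩
  rw [coe_compl]
  exact Set.bijOn_id _

theorem induce_univ (hb : IsGraphIncidenceMap K b) (G : SimpleGraph V) :
    b (G.induce ↑(univ : Finset V)) = b G := by
  refine hb.map_iso _ _ ⟨.comp (induceUnivIso G) (Iso.refl.induce ?_)⟩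
  rw [coe_univ]
  exact Set.bijOn_id _

end IsGraphIncidenceMap

noncomputable def flatSum {H : Type} [AddCommGroup H]
    (b : ∀ {V : Type} [Fintype V] [DecidableEq V], SimpleGraph V → H)
    {V : Type} [Fintype V] [DecidableEq V] (G : SimpleGraph V) : H :=
  ∑ᶠ (F : SimpleGraph V) (_ : IsFlat G F), flatCoeff G F • b F

open scoped Classical in
theorem flatSum_eq_sum {H : Type} [AddCommGroup H]
    (b : ∀ {V : Type} [Fintype V] [DecidableEq V], SimpleGraph V → H)
    {V : Type} [Fintype V] [DecidableEq V] (G : SimpleGraph V) :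
    flatSum b G = ∑ F ∈ Finset.univ.filter (IsFlat G), flatCoeff G F • b F :=
  finsum_cond_eq_sum_of_cond_iff _ fun _ => by simp

theorem Fintype.eq_of_sum_eq_of_forall_ne {ι M : Type*} [Fintype ι] [AddCommGroup M] {f g : ι → M}
    (h : ∑ i, f i = ∑ i, g i) (a : ι) (hne : ∀ i ≠ a, f i = g i) : f a = g a := by
  have := Finset.sum_eq_single (f := fun i => f i - g i) a
    (fun i _ hi => sub_eq_zero.mpr (hne i hi)) fun ha => (ha (Finset.mem_univ a)).elim
  rw [Finset.sum_sub_distrib, h, sub_self] at this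
  exact sub_eq_zero.mp this.symm

namespace IsGraphIncidenceMap

open SimpleGraph Finset
open scoped Classical

variable {K : Type} [Field K] {H : Type} [CommRing H] [HopfAlgebra K H]
  {b : ∀ {V : Type} [Fintype V] [DecidableEq V], SimpleGraph V → H}
  {V : Type} [Fintype V] [DecidableEq V]

theorem flatSum_of_isEmpty (hb : IsGraphIncidenceMap K b) [IsEmpty V] (G : SimpleGraph V) :
    flatSum b G = 1 := by
  have hG : IsFlat G G := ⟨le_rfl, fun _ _ _ h => h⟩
  have : Subsingleton (SimpleGraph V) := ⟨fun _ _ => SimpleGraph.ext <| funext isEmptyElim⟩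
  rw [flatSum_eq_sum, Finset.sum_eq_single_of_mem G (mem_filter.mpr ⟨mem_univ _, hG⟩)
    fun F _ hF => (hF (Subsingleton.elim F G)).elim]
  simp [flatCoeff, hb.eq_one_of_isEmpty]

theorem flatSum_induce_mul (hb : IsGraphIncidenceMap K b) (G : SimpleGraph V) (A : Finset V) :
    flatSum b (G.induce A) * b (G.induce ↑Aᶜ) =
      ∑ F ∈ univ.filter (fun F => IsFlat G F ∧ glue G A (F.induce A) = F),
        flatCoeff (G.induce A) (F.induce A) • b F := by
  rw [flatSum_eq_sum, sum_mul]
  simp_rw [smul_mul_assoc, hb.mul_induce_compl]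
  exact sum_isFlat_induce A fun Fl F => flatCoeff (G.induce A) Fl • b F

theorem sum_flatSum_induce_mul_eq_zero (hb : IsGraphIncidenceMap K b) [Nonempty V]
    (G : SimpleGraph V) :
    ∑ A : Finset V, flatSum b (G.induce A) * b (G.induce ↑Aᶜ) = 0 := by
  simp_rw [hb.flatSum_induce_mul, sum_filter]
  rw [sum_comm]
  refine sum_eq_zero fun F _ => ?_
  by_cases hF : IsFlat G F
  · simp_rw [hF, true_and, ← sum_filter, ← sum_smul, sum_flatCoeff_induce_eq_zero hF, zero_smul]
  · simp [hF]

theorem flatSum_induce_univ_mul (hb : IsGraphIncidenceMap K b) (G : SimpleGraph V) :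
    flatSum b (G.induce ↑(univ : Finset V)) * b (G.induce ↑(univ : Finset V)ᶜ) = flatSum b G := by
  rw [hb.flatSum_induce_mul, flatSum_eq_sum]
  refine sum_congr (filter_congr fun F _ => ?_) fun F _ => ?_
  · exact and_iff_left_of_imp fun hF => glue_induce hF.1 (by simp) (by simp)
  · rw [flatCoeff_induce univ (by simp) (by simp),
      image_univ_of_surjective (ConnectedComponent.ind fun v => ⟨v, rfl⟩)]
    simp [flatCoeff]

theorem antipode_eq_flatSum (hb : IsGraphIncidenceMap K b) (G : SimpleGraph V) :
    HopfAlgebra.antipode K (b G) = flatSum b G := by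
  induction h : Fintype.card V using Nat.strong_induction_on generalizing V with
  | _ n ih =>
    cases isEmpty_or_nonempty V
    · rw [hb.eq_one_of_isEmpty, HopfAlgebra.antipode_one, hb.flatSum_of_isEmpty]
    have hrec := hb.sum_antipode_mul G
    rw [if_neg Fintype.card_ne_zero, map_zero, ← hb.sum_flatSum_induce_mul_eq_zero G] at hrec
    have huniv := Fintype.eq_of_sum_eq_of_forall_ne hrec univ fun A hA => by
      have hcard : Fintype.card A < n :=
        h ▸ (Fintype.card_coe A).trans_lt (by simpa using card_lt_card (ssubset_univ_iff.mpr hA))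
      rw [ih _ hcard (G.induce A) rfl]
    have : IsEmpty (↑((univ : Finset V)ᶜ) : Set V) := ⟨fun x => by simpa using x.2⟩
    rwa [hb.flatSum_induce_univ_mul, hb.induce_univ, hb.eq_one_of_isEmpty (G.induce _), mul_one]
      at huniv

end IsGraphIncidenceMap

/-- in the incidence Hopf algebra on graphs, the antipode of (the
class of) a simple graph `G` on `[n]` is
`S(G) = ∑_{F flat of G} (-1)^{c(F)} a(G/F) F`.  The incidence Hopf algebra is
formalized as a Hopf algebra `H` over a field `K` with a map `b` assigning an
element of `H` to every simple graph on a finite vertex set, invariant under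
graph isomorphism, multiplicative for disjoint unions, with coproduct given by
ordered pairs of complementary induced subgraphs and counit supported on the
empty graph. -/
theorem graph_incidence_antipode (K : Type) [Field K] (H : Type) [CommRing H]
    [HopfAlgebra K H]
    (b : ∀ {V : Type} [Fintype V] [DecidableEq V], SimpleGraph V → H)
    (hiso : ∀ {V W : Type} [Fintype V] [DecidableEq V] [Fintype W]
      [DecidableEq W] (G : SimpleGraph V) (G' : SimpleGraph W),
      Nonempty (G ≃g G') → b G = b G')
    (hmul : ∀ {V W : Type} [Fintype V] [DecidableEq V] [Fintype W]
      [DecidableEq W] (G : SimpleGraph V) (G' : SimpleGraph W),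
      b (disjUnion G G') = b G * b G')
    (hcomul : ∀ {V : Type} [Fintype V] [DecidableEq V] (G : SimpleGraph V),
      Coalgebra.comul (R := K) (b G) =
        ∑ A : Finset V,
          b (SimpleGraph.induce (↑A : Set V) G) ⊗ₜ[K]
            b (SimpleGraph.induce (↑(Aᶜ : Finset V) : Set V) G))
    (hcounit : ∀ {V : Type} [Fintype V] [DecidableEq V] (G : SimpleGraph V),
      Coalgebra.counit (R := K) (b G) =
        if Fintype.card V = 0 then (1 : K) else 0)
    (n : ℕ) (G : SimpleGraph (Fin n)) :
    HopfAlgebra.antipode (R := K) (b G) =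
      ∑ᶠ (Fl : SimpleGraph (Fin n)) (_ : IsFlat G Fl),
        ((-1 : ℤ) ^ (Nat.card Fl.ConnectedComponent) *
          (Nat.card (AcyclicOrientation (contract G Fl)) : ℤ)) • b Fl :=
  IsGraphIncidenceMap.antipode_eq_flatSum ⟨hiso, hmul, hcomul, hcounit⟩ G
end

section
/- In the Hopf algebra NSym of noncommutative symmetric functions, the antipode of the complete homogeneous generator satisfies S(H_n) = ∑_{α ⊨ n} (-1)^{l(α)} H_α, where the sum is over all compositions α of n, l(α) is the number of parts, and H_α = H_{α_1} H_{α_2} ... H_{α_k}. -/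
open TensorProduct

/-- extend a composition of `i` by a last block `n - i`. -/
def nsymExtendComp {n i : ℕ} (hi : i < n) (α : Composition i) : Composition n :=
  ⟨α.blocks ++ [n - i], by
      intro j hj
      rcases List.mem_append.1 hj with h | h
      · exact α.blocks_pos h
      · simp only [List.mem_singleton] at h; omega,
    by simp [α.blocks_sum]; omega⟩

lemma nsym_comp_last {N : Type} [Ring N] (Hh : ℕ → N) (n : ℕ) (hn : 0 < n) :
        ∑ i ∈ Finset.range n,
        (∑ α : Composition i, ((-1 : ℤ) ^ α.length) • (α.blocks.map Hh).prod) * Hh (n - i)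
        = ∑ α : Composition n, -(((-1 : ℤ) ^ α.length) • (α.blocks.map Hh).prod) := by
  simp only [Finset.sum_mul]
  rw [Finset.sum_sigma']
  refine Finset.sum_bij
    (fun p hp => nsymExtendComp (Finset.mem_range.1 (Finset.mem_sigma.1 hp).1) p.2) ?_ ?_ ?_ ?_
  · intro p hp; exact Finset.mem_univ _
  · intro p hp q hq h
    have hp1 := Finset.mem_range.1 (Finset.mem_sigma.1 hp).1
    have hq1 := Finset.mem_range.1 (Finset.mem_sigma.1 hq).1
    have hb : p.2.blocks ++ [n - p.1] = q.2.blocks ++ [n - q.1] :=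
      congrArg Composition.blocks h
    obtain ⟨h1, h2⟩ := List.append_inj' hb (by simp)
    have h2' : n - p.1 = n - q.1 := by simpa using h2
    have hpq : p.1 = q.1 := by omega
    rcases p with ⟨i, α⟩; rcases q with ⟨j, β⟩
    cases hpq
    simp only [Sigma.mk.inj_iff, heq_eq_eq, true_and]
    exact Composition.ext h1
  · intro β _
    have hne : β.blocks ≠ [] := by
      intro h
      have := β.blocks_sum
      rw [h] at this; simp at this; omega
    obtain ⟨l, a, hla⟩ := List.eq_nil_or_concat β.blocks |>.resolve_left hne
    have ha : 0 < a := β.blocks_pos (by rw [hla]; simp)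
    have hsum : l.sum + a = n := by
      have := β.blocks_sum; rw [hla] at this; simpa [List.concat_eq_append] using this
    have hi : l.sum < n := by omega
    refine ⟨⟨l.sum, ⟨l, ?_, rfl⟩⟩, Finset.mem_sigma.2 ⟨Finset.mem_range.2 hi, Finset.mem_univ _⟩, ?_⟩
    · intro j hj
      exact β.blocks_pos (by rw [hla, List.concat_eq_append]; exact List.mem_append_left _ hj)
    · apply Composition.ext
      show l ++ [n - l.sum] = β.blocks
      rw [hla, List.concat_eq_append]
      congr 1
      simp; omega
  · intro p hp
    have hp1 := Finset.mem_range.1 (Finset.mem_sigma.1 hp).1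
    show _ = -(((-1:ℤ) ^ (nsymExtendComp hp1 p.2).length) •
      ((nsymExtendComp hp1 p.2).blocks.map Hh).prod)
    have hlen : (nsymExtendComp hp1 p.2).length = p.2.length + 1 := by
      simp [nsymExtendComp, Composition.length]
    have hblocks : (nsymExtendComp hp1 p.2).blocks = p.2.blocks ++ [n - p.1] := rfl
    rw [hlen, hblocks, List.map_append, List.prod_append]
    simp [pow_succ, smul_mul_assoc, mul_smul, mul_assoc]

lemma nsym_comp_full_sum {N : Type} [Ring N] (Hh : ℕ → N) (h0 : Hh 0 = 1) (n : ℕ) :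
    ∑ i ∈ Finset.range (n + 1),
      (∑ α : Composition i, ((-1 : ℤ) ^ α.length) • (α.blocks.map Hh).prod) * Hh (n - i)
      = if n = 0 then 1 else 0 := by
  rcases Nat.eq_zero_or_pos n with rfl | hn
  · have hu : (Finset.univ : Finset (Composition 0)) = {⟨[], by simp, by simp⟩} := by
      apply Finset.eq_singleton_iff_unique_mem.2
      refine ⟨Finset.mem_univ _, fun β _ => ?_⟩
      have hb : β.blocks = [] := by
        by_contra h
        have h1 := β.blocks_sum
        have h2 : 0 < β.blocks.sum := List.sum_pos _ (fun j hj => β.blocks_pos hj) h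
        omega
      exact Composition.ext hb
    simp [hu, h0, Composition.length]
  · rw [if_neg hn.ne', Finset.sum_range_succ, Nat.sub_self, h0, mul_one,
      nsym_comp_last Hh n hn, Finset.sum_neg_distrib, neg_add_cancel]

/-- in the Hopf algebra `NSym` of noncommutative symmetric
functions, the antipode of the complete homogeneous generator satisfies
`S(H_n) = ∑_{α ⊨ n} (-1)^{l(α)} H_α`.  `NSym` is formalized as a Hopf algebra
`N` over a field `K` with elements `Hh n` satisfying `Hh 0 = 1`,
`Δ(H_n) = ∑_{i=0}^n H_i ⊗ H_{n-i}` and `ε(H_n) = δ_{n,0}`; compositions of `n`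
are Mathlib's `Composition n` and `H_α` is the product of the `H_{α_i}`. -/
theorem nsym_antipode_H (K : Type) [Field K] (N : Type) [Ring N]
    [HopfAlgebra K N] (Hh : ℕ → N)
    (h0 : Hh 0 = 1)
    (hcomul : ∀ n : ℕ, Coalgebra.comul (R := K) (Hh n) =
      ∑ i ∈ Finset.range (n + 1), Hh i ⊗ₜ[K] Hh (n - i))
    (hcounit : ∀ n : ℕ,
      Coalgebra.counit (R := K) (Hh n) = if n = 0 then (1 : K) else 0)
    (n : ℕ) :
    HopfAlgebra.antipode (R := K) (Hh n) =
      ∑ α : Composition n, ((-1 : ℤ) ^ α.length) • (α.blocks.map Hh).prod := by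
  induction n using Nat.strong_induction_on with
  | _ n ih =>
    have key : ∑ i ∈ Finset.range (n + 1),
        HopfAlgebra.antipode (R := K) (Hh i) * Hh (n - i)
        = if n = 0 then (1 : N) else 0 := by
      have h := congrArg (fun f => f (Hh n))
        (HopfAlgebra.mul_antipode_rTensor_comul (R := K) (A := N))
      simp only [LinearMap.comp_apply] at h
      rw [hcomul, map_sum, map_sum] at h
      simp only [LinearMap.rTensor_tmul, LinearMap.mul'_apply,
        Algebra.linearMap_apply, hcounit] at h
      rw [h, apply_ite (algebraMap K N), map_one, map_zero]
    have key2 := nsym_comp_full_sum Hh h0 n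
    rw [Finset.sum_range_succ, Nat.sub_self, h0, mul_one] at key key2
    have hsum : ∑ i ∈ Finset.range n,
        HopfAlgebra.antipode (R := K) (Hh i) * Hh (n - i)
        = ∑ i ∈ Finset.range n,
          (∑ α : Composition i, ((-1 : ℤ) ^ α.length) • (α.blocks.map Hh).prod) * Hh (n - i) :=
      Finset.sum_congr rfl fun i hi => by rw [ih i (Finset.mem_range.1 hi)]
    rw [hsum] at key
    have := key.trans key2.symm
    exact add_left_cancel this
end

section
/- In NSym, the antipode of the one-row immaculate function satisfies S(𝒮_n) = (-1)^n 𝒮_{1^n}, where 𝒮_n = H_n and 𝒮_{1^n} = Det(H_{j-i+1})_{1≤i,j≤n} is the noncommutative determinant of the n×n matrix with (i,j) entry H_{j-i+1} (with H_0 = 1 and H_m = 0 for m < 0), defined as Det(A) = ∑_{σ ∈ S_n} sgn(σ) a_{1,σ(1)} a_{2,σ(2)} ... a_{n,σ(n)}. -/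
/-! The antipode is pinned down recursively by `∑ᵢ S(Hᵢ) H_{n-i} = δ_{n,0}` and `H₀ = 1`, so it
suffices that `(-1)ⁿ 𝒮_{1ⁿ}` satisfies the same identity. The matrix `(H_{j-i+1})` is upper
Hessenberg with ones on the subdiagonal; since the last row contributes the rightmost factor of
each row-ordered product, expanding along it still works over a noncommutative ring and yields
`𝒮_{1ⁿ⁺¹} = ∑_{r ≤ n} (-1)^{n-r} 𝒮_{1ʳ} H_{n+1-r}`. The minors met on the way have a different
last column, so the expansion is carried out for Hessenberg matrices bordered by an arbitrary
last column. -/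

open TensorProduct

/-- The noncommutative determinant `Det(H_{j-i+1})_{1≤i,j≤n}`, with factors in
row order, `H_0 = 1` and `H_m = 0` for `m < 0`; this is the immaculate function
`𝒮_{1^n}`. -/
noncomputable def detOneColumn {N : Type} [Ring N] (Hh : ℕ → N) (n : ℕ) : N :=
  ∑ σ : Equiv.Perm (Fin n), ((Equiv.Perm.sign σ : ℤˣ) : ℤ) •
    ((List.finRange n).map (fun (i : Fin n) =>
      if (i : ℕ) ≤ (σ i : ℕ) + 1 then Hh ((σ i : ℕ) + 1 - (i : ℕ)) else 0)).prod

open Equiv Finset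

def Equiv.Perm.decomposeFinLast {n : ℕ} : Perm (Fin (n + 1)) ≃ Fin (n + 1) × Perm (Fin n) :=
  ((Equiv.permCongr finSuccEquivLast).trans Equiv.Perm.decomposeOption).trans
    (Equiv.prodCongr finSuccEquivLast.symm (Equiv.refl _))

namespace Equiv.Perm

@[simp]
theorem decomposeFinLast_symm_apply_last {n : ℕ} (p : Fin (n + 1)) (e : Perm (Fin n)) :
    decomposeFinLast.symm (p, e) (Fin.last n) = p := by
  simp [decomposeFinLast]

@[simp]
theorem decomposeFinLast_symm_apply_castSucc {n : ℕ} (p : Fin (n + 1)) (e : Perm (Fin n))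
    (x : Fin n) : decomposeFinLast.symm (p, e) x.castSucc = swap (Fin.last n) p (e x).castSucc := by
  refine Fin.lastCases ?_ (fun i => ?_) p
  · simp [decomposeFinLast]
  · by_cases h : i = e x
    · simp [h, decomposeFinLast]
    · simp [decomposeFinLast, swap_apply_def, Ne.symm h]

@[simp]
theorem decomposeFinLast_symm_sign {n : ℕ} (p : Fin (n + 1)) (e : Perm (Fin n)) :
    sign (decomposeFinLast.symm (p, e)) = ite (p = Fin.last n) 1 (-1) * sign e := by
  refine Fin.lastCases ?_ (fun i => ?_) p <;> simp [decomposeFinLast]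

end Equiv.Perm

section NcDet

variable {N : Type*} [Ring N]

noncomputable def ncDet {n : ℕ} (M : Matrix (Fin n) (Fin n) N) : N :=
  ∑ σ : Perm (Fin n), (Perm.sign σ : ℤ) • (List.ofFn fun i => M i (σ i)).prod

@[simp]
theorem ncDet_fin_zero (M : Matrix (Fin 0) (Fin 0) N) : ncDet M = 1 := by
  simp [ncDet]

@[simp]
theorem ncDet_fin_one (M : Matrix (Fin 1) (Fin 1) N) : ncDet M = M 0 0 := by
  simp [ncDet, Fin.fin_one_eq_zero]

theorem ncDet_succ_last_row {n : ℕ} (M : Matrix (Fin (n + 1)) (Fin (n + 1)) N) :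
    ncDet M = ∑ p : Fin (n + 1), (if p = Fin.last n then 1 else -1 : ℤ) •
      (ncDet (Matrix.of fun i j : Fin n => M i.castSucc (swap (Fin.last n) p j.castSucc)) *
        M (Fin.last n) p) := by
  rw [ncDet, ← Perm.decomposeFinLast.symm.sum_comp, Fintype.sum_prod_type]
  refine sum_congr rfl fun p _ => ?_
  rw [ncDet, sum_mul, smul_sum]
  refine sum_congr rfl fun e _ => ?_
  rw [List.ofFn_succ', List.prod_concat]
  simp only [Perm.decomposeFinLast_symm_apply_last, Perm.decomposeFinLast_symm_apply_castSucc,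
    Perm.decomposeFinLast_symm_sign, Matrix.of_apply, smul_mul_assoc, smul_smul]
  split_ifs <;> simp

def leadingSubmatrix (A : ℕ → ℕ → N) (n : ℕ) : Matrix (Fin n) (Fin n) N :=
  Matrix.of fun i j => A i j

def borderedSubmatrix (A : ℕ → ℕ → N) (v : ℕ → N) (n : ℕ) :
    Matrix (Fin (n + 1)) (Fin (n + 1)) N :=
  Matrix.of fun i j => if (j : ℕ) = n then v i else A i j

section Hessenberg

variable {A : ℕ → ℕ → N}

theorem ncDet_borderedSubmatrix_succ (hA : ∀ i j, j + 1 < i → A i j = 0)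
    (v : ℕ → N) (n : ℕ) :
    ncDet (borderedSubmatrix A v (n + 1)) =
      ncDet (leadingSubmatrix A (n + 1)) * v (n + 1) -
        ncDet (borderedSubmatrix A v n) * A (n + 1) n := by
  rw [ncDet_succ_last_row, ← sum_subset (subset_univ {(Fin.last n).castSucc, Fin.last (n + 1)}),
    sum_pair (Fin.castSucc_lt_last _).ne]
  · have hlast : (Matrix.of fun i j : Fin (n + 1) => borderedSubmatrix A v (n + 1) i.castSucc
        (swap (Fin.last (n + 1)) (Fin.last (n + 1)) j.castSucc)) = leadingSubmatrix A (n + 1) := by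
      ext i j
      simp [borderedSubmatrix, leadingSubmatrix, j.isLt.ne]
    have hprev : (Matrix.of fun i j : Fin (n + 1) => borderedSubmatrix A v (n + 1) i.castSucc
        (swap (Fin.last (n + 1)) (Fin.last n).castSucc j.castSucc)) = borderedSubmatrix A v n := by
      ext i j
      rcases Fin.eq_castSucc_or_eq_last j with ⟨j, rfl⟩ | rfl
      · simp [borderedSubmatrix, swap_apply_of_ne_of_ne, j.isLt.ne,
          (j.isLt.trans n.lt_succ_self).ne]
      · simp [borderedSubmatrix]
    have hM (p : Fin (n + 2)) : borderedSubmatrix A v (n + 1) (Fin.last (n + 1)) p =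
        if (p : ℕ) = n + 1 then v (n + 1) else A (n + 1) p := rfl
    rw [hlast, hprev, hM, hM]
    simp [sub_eq_add_neg, add_comm]
  · intro p _ hp
    have hpn : (p : ℕ) + 1 < n + 1 := by
      simp only [mem_insert, mem_singleton, Fin.ext_iff, Fin.val_castSucc, Fin.val_last] at hp
      omega
    simp [borderedSubmatrix, hA _ _ hpn, show (p : ℕ) ≠ n + 1 by omega]

theorem ncDet_borderedSubmatrix_eq_sum (hA : ∀ i j, j + 1 < i → A i j = 0)
    (hA₁ : ∀ j, A (j + 1) j = 1) (v : ℕ → N) (n : ℕ) :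
    ncDet (borderedSubmatrix A v n) = ∑ r ∈ range (n + 1),
      (-1 : ℤ) ^ (n - r) • (ncDet (leadingSubmatrix A r) * v r) := by
  induction n with
  | zero => simp [borderedSubmatrix]
  | succ n ih =>
    rw [ncDet_borderedSubmatrix_succ hA, ih, hA₁, mul_one, sum_range_succ _ (n + 1),
      Nat.sub_self, pow_zero, one_smul, sub_eq_neg_add, ← sum_neg_distrib]
    congr 1
    refine sum_congr rfl fun r hr => ?_
    rw [Nat.succ_sub (mem_range_succ_iff.mp hr), pow_succ, mul_neg_one, neg_smul]

theorem ncDet_leadingSubmatrix_succ (hA : ∀ i j, j + 1 < i → A i j = 0)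
    (hA₁ : ∀ j, A (j + 1) j = 1) (n : ℕ) :
    ncDet (leadingSubmatrix A (n + 1)) = ∑ r ∈ range (n + 1),
      (-1 : ℤ) ^ (n - r) • (ncDet (leadingSubmatrix A r) * A r n) := by
  rw [← ncDet_borderedSubmatrix_eq_sum hA hA₁]
  congr 1
  ext i j
  simp +contextual [borderedSubmatrix, leadingSubmatrix]

end Hessenberg

end NcDet

section OneColumn

variable {N : Type} [Ring N]

def oneColumnMatrix (H : ℕ → N) (i j : ℕ) : N := if i ≤ j + 1 then H (j + 1 - i) else 0

theorem detOneColumn_eq_ncDet (H : ℕ → N) (n : ℕ) :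
    detOneColumn H n = ncDet (leadingSubmatrix (oneColumnMatrix H) n) := by
  simp [detOneColumn, ncDet, leadingSubmatrix, oneColumnMatrix, List.ofFn_eq_map]

theorem detOneColumn_succ {H : ℕ → N} (h0 : H 0 = 1) (n : ℕ) :
    detOneColumn H (n + 1) = ∑ r ∈ range (n + 1),
      (-1 : ℤ) ^ (n - r) • (detOneColumn H r * H (n + 1 - r)) := by
  have hzero (i j : ℕ) (h : j + 1 < i) : oneColumnMatrix H i j = 0 := if_neg h.not_ge
  have hsub (j : ℕ) : oneColumnMatrix H (j + 1) j = 1 := by simp [oneColumnMatrix, h0]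
  simp_rw [detOneColumn_eq_ncDet, ncDet_leadingSubmatrix_succ hzero hsub]
  refine sum_congr rfl fun r hr => ?_
  rw [oneColumnMatrix, if_pos (by have := mem_range.mp hr; omega)]

theorem sum_neg_one_pow_smul_detOneColumn_mul_eq_ite {H : ℕ → N} (h0 : H 0 = 1) (n : ℕ) :
    ∑ i ∈ range (n + 1), ((-1 : ℤ) ^ i • detOneColumn H i) * H (n - i) =
      if n = 0 then 1 else 0 := by
  cases n with
  | zero => simp [detOneColumn_eq_ncDet, h0]
  | succ n =>
    rw [sum_range_succ, detOneColumn_succ h0, if_neg n.succ_ne_zero, Nat.sub_self, h0, mul_one,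
      smul_sum, ← sum_add_distrib]
    refine sum_eq_zero fun r hr => ?_
    obtain ⟨k, rfl⟩ := Nat.exists_eq_add_of_le (mem_range_succ_iff.mp hr)
    have hsign : (-1 : ℤ) ^ r + (-1) ^ (r + k + 1) * (-1) ^ (r + k - r) = 0 := by
      rw [Nat.add_sub_cancel_left, ← pow_add, show r + k + 1 + k = r + 1 + 2 * k by ring, pow_add,
        pow_mul]
      simp [pow_succ]
    rw [smul_smul, smul_mul_assoc, ← add_smul, hsign, zero_smul]

end OneColumn

theorem sum_antipode_mul_eq_ite {K H : Type*} [CommSemiring K] [Semiring H] [HopfAlgebra K H]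
    {h : ℕ → H}
    (hcomul : ∀ n, Coalgebra.comul (R := K) (h n) = ∑ i ∈ range (n + 1), h i ⊗ₜ[K] h (n - i))
    (hcounit : ∀ n, Coalgebra.counit (R := K) (h n) = if n = 0 then (1 : K) else 0) (n : ℕ) :
    ∑ i ∈ range (n + 1), HopfAlgebra.antipode K (h i) * h (n - i) = if n = 0 then 1 else 0 := by
  have hS := HopfAlgebra.mul_antipode_rTensor_comul_apply (R := K) (h n)
  rw [hcomul, map_sum, map_sum] at hS
  simp only [LinearMap.rTensor_tmul, LinearMap.mul'_apply] at hS
  rw [hS, hcounit, apply_ite (algebraMap K H), map_one, map_zero]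

theorem eq_of_sum_mul_eq {S : Type*} [Ring S] {h x y : ℕ → S} (h0 : h 0 = 1)
    (hxy : ∀ n, ∑ i ∈ range (n + 1), x i * h (n - i) = ∑ i ∈ range (n + 1), y i * h (n - i)) :
    x = y := by
  funext n
  induction n using Nat.strong_induction_on with
  | _ n ih =>
    have := hxy n
    rw [sum_range_succ, sum_range_succ, Nat.sub_self, h0, mul_one, mul_one,
      sum_congr rfl fun i hi => by rw [ih i (mem_range.mp hi)]] at this
    exact add_left_cancel this

/-- in `NSym`, the antipode of the one-row immaculate function
satisfies `S(𝒮_n) = (-1)^n 𝒮_{1^n}`, where `𝒮_n = H_n` and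
`𝒮_{1^n} = Det(H_{j-i+1})` is the noncommutative determinant
`∑_{σ ∈ S_n} sgn(σ) a_{1,σ(1)} ⋯ a_{n,σ(n)}`. -/
theorem nsym_antipode_one_row (K : Type) [Field K] (N : Type) [Ring N]
    [HopfAlgebra K N] (Hh : ℕ → N)
    (h0 : Hh 0 = 1)
    (hcomul : ∀ n : ℕ, Coalgebra.comul (R := K) (Hh n) =
      ∑ i ∈ Finset.range (n + 1), Hh i ⊗ₜ[K] Hh (n - i))
    (hcounit : ∀ n : ℕ,
      Coalgebra.counit (R := K) (Hh n) = if n = 0 then (1 : K) else 0)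
    (n : ℕ) :
    HopfAlgebra.antipode (R := K) (Hh n) =
      ((-1 : ℤ) ^ n) • detOneColumn Hh n := by
  refine congrFun (eq_of_sum_mul_eq (x := fun i => HopfAlgebra.antipode K (Hh i))
    (y := fun i => (-1 : ℤ) ^ i • detOneColumn Hh i) h0 fun m => ?_) n
  rw [sum_antipode_mul_eq_ite hcomul hcounit, sum_neg_one_pow_smul_detOneColumn_mul_eq_ite h0]
end

section
/- In NSym, the noncommutative determinant Det(H_{j-i+1})_{1≤i,j≤n} expands as ∑_{α ⊨ n} (-1)^{n + l(α)} H_α: the nonzero products in the determinant expansion are in sign-preserving bijection with compositions of n. -/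
/-!
The row-ordered determinant can still be expanded along its first row, over any ring. For the
matrix `(H_{j-i+1})` that row is `H_1, …, H_{n+1}`, and the minor left by deleting row `0` and
column `j` has first column `(H_0, 0, …, 0)`; peeling off `H_0 = 1` lowers `j` by one, so the minor
has the determinant `D (n - j)` of the same matrix of size `n - j`. Hence
`D (n + 1) = ∑ j, (-1)^j H_{j+1} D (n - j)`, and splitting off the first part of a composition
gives the same recursion for the right-hand side.
-/

open Equiv Equiv.Perm Finset

namespace Equiv.Perm

def consSuccAbove {n : ℕ} (j : Fin (n + 1)) (τ : Perm (Fin n)) : Perm (Fin (n + 1)) :=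
  j.cycleRange.symm * decomposeFin.symm (0, τ)

variable {n : ℕ}

@[simp]
theorem consSuccAbove_zero (j : Fin (n + 1)) (τ : Perm (Fin n)) : consSuccAbove j τ 0 = j := by
  simp [consSuccAbove]

@[simp]
theorem consSuccAbove_succ (j : Fin (n + 1)) (τ : Perm (Fin n)) (i : Fin n) :
    consSuccAbove j τ i.succ = j.succAbove (τ i) := by
  simp [consSuccAbove, decomposeFin_symm_apply_succ]

theorem sign_consSuccAbove (j : Fin (n + 1)) (τ : Perm (Fin n)) :
    sign (consSuccAbove j τ) = (-1) ^ (j : ℕ) * sign τ := by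
  simp [consSuccAbove, decomposeFin.symm_sign]

theorem consSuccAbove_bijective :
    Function.Bijective fun p : Fin (n + 1) × Perm (Fin n) => consSuccAbove p.1 p.2 := by
  refine (Fintype.bijective_iff_injective_and_card _).mpr ⟨?_, ?_⟩
  · rintro ⟨j, τ⟩ ⟨j', τ'⟩ h
    obtain rfl : j = j' := by simpa using congr($h 0)
    refine Prod.ext rfl (Equiv.ext fun i => j.succAbove_right_injective ?_)
    simpa using congr($h i.succ)
  · simp [Fintype.card_perm, Nat.factorial_succ]

end Equiv.Perm

namespace Composition

def cons {n : ℕ} (j : Fin (n + 1)) (β : Composition (n - j)) : Composition (n + 1) where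
  blocks := (j + 1) :: β.blocks
  blocks_pos := by
    simp only [List.mem_cons, forall_eq_or_imp]
    exact ⟨by omega, fun _ => β.blocks_pos⟩
  blocks_sum := by simp [β.blocks_sum]; omega

theorem cons_bijective (n : ℕ) :
    Function.Bijective fun p : Σ j : Fin (n + 1), Composition (n - j) => cons p.1 p.2 := by
  constructor
  · rintro ⟨j, β⟩ ⟨j', β'⟩ h
    obtain ⟨hj, hβ⟩ : (j : ℕ) = j' ∧ β.blocks = β'.blocks := by
      simpa [cons] using congrArg blocks h
    obtain rfl : j = j' := Fin.ext hj
    rw [Composition.ext hβ]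
  · intro α
    obtain ⟨b, l, hbl⟩ : ∃ b l, α.blocks = b :: l :=
      List.exists_cons_of_ne_nil (by simp [blocks_eq_nil])
    have hb : 0 < b := α.blocks_pos (by simp [hbl])
    have hsum : b + l.sum = n + 1 := by simpa [hbl] using α.blocks_sum
    refine ⟨⟨⟨b - 1, by omega⟩, ⟨l, fun hi => α.blocks_pos (by simp [hbl, hi]), by simp; omega⟩⟩,
      Composition.ext ?_⟩
    simp only [cons, hbl, List.cons.injEq, and_true]
    omega

theorem sum_blocks_zero {M : Type*} [AddCommMonoid M] (f : List ℕ → M) :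
    ∑ α : Composition 0, f α.blocks = f [] := by
  have hnil (α : Composition 0) : α.blocks = [] := α.blocks_eq_nil.mpr rfl
  have : Subsingleton (Composition 0) := ⟨fun α β => Composition.ext (by rw [hnil, hnil])⟩
  rw [Fintype.sum_subsingleton _ default, hnil]

theorem sum_blocks_succ {M : Type*} [AddCommMonoid M] (n : ℕ) (f : List ℕ → M) :
    ∑ α : Composition (n + 1), f α.blocks =
      ∑ j : Fin (n + 1), ∑ β : Composition (n - j), f ((j + 1) :: β.blocks) := by
  rw [← Fintype.sum_bijective _ (cons_bijective n) _ _ fun _ => rfl, Fintype.sum_sigma]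
  rfl

end Composition

section SignedCompositionSum

variable {R : Type*} [Ring R]

def signedCompositionSum (H : ℕ → R) (n : ℕ) : R :=
  ∑ α : Composition n, (-1 : ℤ) ^ (n + α.length) • (α.blocks.map H).prod

theorem signedCompositionSum_zero (H : ℕ → R) : signedCompositionSum H 0 = 1 := by
  rw [signedCompositionSum,
    Composition.sum_blocks_zero fun l => (-1 : ℤ) ^ (0 + l.length) • (l.map H).prod]
  simp

theorem signedCompositionSum_succ (H : ℕ → R) (n : ℕ) :
    signedCompositionSum H (n + 1) = ∑ j : Fin (n + 1),
      (-1 : ℤ) ^ (j : ℕ) • (H (j + 1) * signedCompositionSum H (n - j)) := by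
  rw [signedCompositionSum, Composition.sum_blocks_succ n
    fun l => (-1 : ℤ) ^ (n + 1 + l.length) • (l.map H).prod]
  refine Finset.sum_congr rfl fun j _ => ?_
  rw [signedCompositionSum, Finset.mul_sum, Finset.smul_sum]
  refine Finset.sum_congr rfl fun β _ => ?_
  have hexp : n + 1 + (β.length + 1) = j + (n - j + β.length) + 2 := by omega
  rw [List.length_cons, List.map_cons, List.prod_cons, mul_smul_comm, smul_smul, ← pow_add, hexp,
    pow_add _ _ 2, neg_one_sq, mul_one]

end SignedCompositionSum

namespace Matrix

variable {R : Type*} [Ring R]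

def rowDet {n : ℕ} (A : Matrix (Fin n) (Fin n) R) : R :=
  ∑ σ : Perm (Fin n), ((sign σ : ℤˣ) : ℤ) • (List.ofFn fun i => A i (σ i)).prod

@[simp]
theorem rowDet_fin_zero (A : Matrix (Fin 0) (Fin 0) R) : rowDet A = 1 := by
  simp [rowDet]

theorem rowDet_succ_row_zero {n : ℕ} (A : Matrix (Fin (n + 1)) (Fin (n + 1)) R) :
    rowDet A = ∑ j : Fin (n + 1),
      (-1 : ℤ) ^ (j : ℕ) • (A 0 j * rowDet (A.submatrix Fin.succ j.succAbove)) := by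
  rw [rowDet, ← Fintype.sum_bijective _ consSuccAbove_bijective _ _ fun _ => rfl,
    Fintype.sum_prod_type]
  refine Finset.sum_congr rfl fun j _ => ?_
  simp only [rowDet, List.ofFn_succ, List.prod_cons, consSuccAbove_zero, consSuccAbove_succ,
    sign_consSuccAbove, Units.val_mul, Units.val_pow_eq_pow_val, Units.val_neg, Units.val_one,
    mul_smul, Finset.mul_sum, Finset.smul_sum, mul_smul_comm, submatrix_apply]

theorem rowDet_eq_zero_of_column_eq_zero {n : ℕ} (A : Matrix (Fin n) (Fin n) R) (k : Fin n)
    (h : ∀ i, A i k = 0) : rowDet A = 0 := by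
  refine Finset.sum_eq_zero fun σ _ => ?_
  rw [List.prod_eq_zero, smul_zero]
  exact List.mem_ofFn.mpr ⟨σ.symm k, by simp [h]⟩

theorem rowDet_eq_mul_of_succ_column_zero {n : ℕ} (A : Matrix (Fin (n + 1)) (Fin (n + 1)) R)
    (h : ∀ i : Fin n, A i.succ 0 = 0) :
    rowDet A = A 0 0 * rowDet (A.submatrix Fin.succ Fin.succ) := by
  rw [rowDet_succ_row_zero, Fin.sum_univ_succ, Finset.sum_eq_zero fun k _ => ?_]
  · simp
  have hk : k.succ.succAbove ⟨0, k.pos⟩ = 0 :=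
    Fin.succAbove_of_castSucc_lt _ _ (by simp [Fin.lt_def])
  rw [rowDet_eq_zero_of_column_eq_zero _ ⟨0, k.pos⟩ fun i => by simp [hk, h], mul_zero, smul_zero]

-- The paper's `(H_{j-i+1})`, 0-indexed; the `if` is `H_m = 0` for `m < 0`, which truncated
-- subtraction would otherwise turn into `H_0`.
def hessenbergToeplitz (H : ℕ → R) (n : ℕ) : Matrix (Fin n) (Fin n) R :=
  of fun i k => if (i : ℕ) ≤ k + 1 then H (k + 1 - i) else 0

@[simp]
theorem hessenbergToeplitz_succ_succ (H : ℕ → R) {n : ℕ} (i k : Fin n) :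
    hessenbergToeplitz H (n + 1) i.succ k.succ = hessenbergToeplitz H n i k := by
  simp [hessenbergToeplitz]

@[simp]
theorem hessenbergToeplitz_submatrix_succ_succ (H : ℕ → R) (n : ℕ) :
    (hessenbergToeplitz H (n + 1)).submatrix Fin.succ Fin.succ = hessenbergToeplitz H n := by
  ext i k
  simp

theorem hessenbergToeplitz_zero_apply (H : ℕ → R) (n : ℕ) (k : Fin (n + 1)) :
    hessenbergToeplitz H (n + 1) 0 k = H (k + 1) := by
  simp [hessenbergToeplitz]

theorem hessenbergToeplitz_apply_of_lt (H : ℕ → R) {n : ℕ} {i k : Fin n} (h : (k : ℕ) + 1 < i) :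
    hessenbergToeplitz H n i k = 0 := by
  simp [hessenbergToeplitz, h.not_ge]

theorem rowDet_hessenbergToeplitz_submatrix_succ_succAbove {H : ℕ → R} (h0 : H 0 = 1) (n : ℕ)
    (j : Fin (n + 1)) :
    rowDet ((hessenbergToeplitz H (n + 1)).submatrix Fin.succ j.succAbove) =
      rowDet (hessenbergToeplitz H (n - j)) := by
  induction n with
  | zero => rw [Nat.zero_sub]; simp [Fin.fin_one_eq_zero j]
  | succ m ih =>
    obtain rfl | ⟨j, rfl⟩ := j.eq_zero_or_eq_succ
    · simp
    set B := (hessenbergToeplitz H (m + 2)).submatrix Fin.succ j.succ.succAbove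
    have hcol (i : Fin m) : B i.succ 0 = 0 := by
      simp only [B, submatrix_apply, Fin.succ_succAbove_zero]
      exact hessenbergToeplitz_apply_of_lt H (by simp)
    have hB00 : B 0 0 = 1 := by simp [B, hessenbergToeplitz, h0]
    have hB : B.submatrix Fin.succ Fin.succ =
        (hessenbergToeplitz H (m + 1)).submatrix Fin.succ j.succAbove := by
      ext i k; simp [B]
    rw [rowDet_eq_mul_of_succ_column_zero B hcol, hB00, one_mul, hB, ih, Fin.val_succ,
      Nat.add_sub_add_right]

theorem rowDet_hessenbergToeplitz_succ {H : ℕ → R} (h0 : H 0 = 1) (n : ℕ) :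
    rowDet (hessenbergToeplitz H (n + 1)) = ∑ j : Fin (n + 1),
      (-1 : ℤ) ^ (j : ℕ) • (H (j + 1) * rowDet (hessenbergToeplitz H (n - j))) := by
  simp only [rowDet_succ_row_zero, hessenbergToeplitz_zero_apply,
    rowDet_hessenbergToeplitz_submatrix_succ_succAbove h0]

theorem rowDet_hessenbergToeplitz {H : ℕ → R} (h0 : H 0 = 1) (n : ℕ) :
    rowDet (hessenbergToeplitz H n) = signedCompositionSum H n := by
  induction n using Nat.strong_induction_on with
  | _ n ih =>
    cases n with
    | zero => simp [signedCompositionSum_zero]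
    | succ n =>
      rw [rowDet_hessenbergToeplitz_succ h0, signedCompositionSum_succ]
      exact Finset.sum_congr rfl fun j _ => by rw [ih _ (by omega)]

end Matrix

/-- the noncommutative determinant `Det(H_{j-i+1})_{1≤i,j≤n}`
(with factors in row order, `H_0 = 1`, `H_m = 0` for `m < 0`) expands as
`∑_{α ⊨ n} (-1)^{n + l(α)} H_α`: its nonzero products are in sign-preserving
bijection with compositions of `n`.  This is an identity valid for any ring `N`
and any `H : ℕ → N` with `H 0 = 1`. -/
theorem det_one_column_expansion (N : Type) [Ring N] (Hh : ℕ → N)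
    (h0 : Hh 0 = 1) (n : ℕ) :
    (∑ σ : Equiv.Perm (Fin n), ((Equiv.Perm.sign σ : ℤˣ) : ℤ) •
      ((List.finRange n).map (fun (i : Fin n) =>
        if (i : ℕ) ≤ (σ i : ℕ) + 1 then Hh ((σ i : ℕ) + 1 - (i : ℕ)) else 0)).prod) =
    ∑ α : Composition n, ((-1 : ℤ) ^ (n + α.length)) • (α.blocks.map Hh).prod := by
  simp_rw [← List.ofFn_eq_map]
  exact Matrix.rowDet_hessenbergToeplitz h0 n
end

section
/- In the Malvenuto-Reutenauer Hopf algebra SSym on permutations, the antipode of the identity permutation satisfies S(12...n) = (-1)^n · (n(n-1)...1), i.e., the antipode of the identity permutation of [n] is (-1)^n times the reversal (decreasing) permutation. -/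
open TensorProduct

/-- The multiset of all shuffles (interleavings) of two words. -/
def shuffles {α : Type*} : List α → List α → Multiset (List α)
  | [], w => {w}
  | a :: v, [] => {a :: v}
  | a :: v, b :: w =>
      ((shuffles v (b :: w)).map (a :: ·)) + ((shuffles (a :: v) w).map (b :: ·))
  termination_by v w => v.length + w.length
  decreasing_by all_goals (simp; try omega)

/-- Standardization of a word of distinct letters: replace the smallest letter
by `1`, the next smallest by `2`, and so on. -/
def stw (w : List ℕ) : List ℕ :=
  w.map (fun a => (w.filter (· < a)).length + 1)

/-- `w` is the one-line notation of a permutation of `{1, …, n}` where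
`n = w.length`. -/
def IsPermList (w : List ℕ) : Prop := w.Perm (List.range' 1 w.length)

/-!
Takeuchi's recursion `∑ S(12⋯i) · 12⋯(n-i) = ε(12⋯n)` expresses `S(12⋯n)` through the
antipodes of shorter identities. By induction, the `i`-th term is `(-1)^i` times the sum of
all shuffles of the decreasing word `i⋯1` with the increasing word `(i+1)⋯n`. Sorting these
shuffles by their first letter (`i` or `i+1`) splits the `i`-th sum into two pieces, each
shared with a neighbouring term, so the alternating sum telescopes down to the single
shuffle `n⋯1`.
-/

section Shuffles

variable {α : Type*}

@[simp]
lemma shuffles_nil_left (w : List α) : shuffles [] w = {w} := by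
  simp [shuffles]

@[simp]
lemma shuffles_nil_right (v : List α) : shuffles v [] = {v} := by
  cases v <;> simp [shuffles]

lemma shuffles_cons_cons (a b : α) (v w : List α) :
    shuffles (a :: v) (b :: w) =
      (shuffles v (b :: w)).map (a :: ·) + (shuffles (a :: v) w).map (b :: ·) := by
  rw [shuffles]

end Shuffles

namespace List

lemma reverse_range'_one_succ (n : ℕ) :
    (range' 1 (n + 1)).reverse = (n + 1) :: (range' 1 n).reverse := by
  rw [range'_1_concat, reverse_append, Nat.add_comm]
  rfl

lemma map_add_right_range' (s n k : ℕ) : (range' s n).map (· + k) = range' (s + k) n := by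
  simpa only [Nat.add_comm k, Nat.add_comm _ s] using map_add_range' (a := k) s n 1

lemma length_filter_lt_range' (x : ℕ) :
    ∀ s n : ℕ, ((range' s n).filter (· < x)).length = min (x - s) n
  | _, 0 => by simp
  | s, n + 1 => by
    rw [range'_succ]
    by_cases h : s < x <;>
      simp [h, length_filter_lt_range' x (s + 1) n] <;> omega

end List

open List

lemma stw_range' (s n : ℕ) : stw (range' s n) = range' 1 n := by
  refine ext_getElem (by simp [stw]) fun j h₁ h₂ => ?_
  simp only [stw, getElem_map, getElem_range', length_filter_lt_range']
  simp only [length_range'] at h₂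
  omega

lemma isPermList_range' (n : ℕ) : IsPermList (range' 1 n) := by
  rw [IsPermList, length_range']

lemma isPermList_reverse_range' (n : ℕ) : IsPermList (range' 1 n).reverse := by
  rw [IsPermList, length_reverse, length_range']
  exact reverse_perm _

def descAscShuffles (i k : ℕ) : Multiset (List ℕ) :=
  shuffles (range' 1 i).reverse (range' (i + 1) k)

/-- The shuffles of `j⋯1` with `(j+1)⋯(j+k+1)` that start with `j+1`. -/
def descAscShufflesHead (j k : ℕ) : Multiset (List ℕ) :=
  (shuffles (range' 1 j).reverse (range' (j + 2) k)).map ((j + 1) :: ·)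

lemma descAscShuffles_zero_succ (k : ℕ) :
    descAscShuffles 0 (k + 1) = descAscShufflesHead 0 k := by
  simp [descAscShuffles, descAscShufflesHead, range'_succ]

lemma descAscShuffles_succ_succ (j k : ℕ) :
    descAscShuffles (j + 1) (k + 1) =
      descAscShufflesHead j (k + 1) + descAscShufflesHead (j + 1) k := by
  rw [descAscShuffles, reverse_range'_one_succ, range'_succ, shuffles_cons_cons,
    ← reverse_range'_one_succ]
  rfl

lemma descAscShufflesHead_zero (j : ℕ) :
    descAscShufflesHead j 0 = {(range' 1 (j + 1)).reverse} := by
  simp [descAscShufflesHead, reverse_range'_one_succ]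

lemma sum_range_neg_one_pow_smul_telescope {M : Type*} [AddCommGroup M] (f g : ℕ → M)
    (m : ℕ) (h₀ : g 0 = f 0) (hsucc : ∀ j < m, g (j + 1) = f j + f (j + 1)) :
    ∑ i ∈ Finset.range (m + 1), (-1 : ℤ) ^ i • g i = (-1 : ℤ) ^ m • f m := by
  induction m with
  | zero => simp [h₀]
  | succ m ih =>
    rw [Finset.sum_range_succ, ih fun j hj => hsucc j (by omega), hsucc m m.lt_succ_self,
      smul_add, pow_succ, mul_smul, mul_smul]
    simp only [neg_smul, one_smul, smul_neg]
    abel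

lemma sum_range_neg_one_pow_smul_descAscShuffles {M : Type*} [AddCommGroup M]
    (e : List ℕ → M) (n : ℕ) :
    ∑ i ∈ Finset.range (n + 1), (-1 : ℤ) ^ i • ((descAscShuffles i (n + 1 - i)).map e).sum =
      (-1 : ℤ) ^ n • e (range' 1 (n + 1)).reverse := by
  rw [sum_range_neg_one_pow_smul_telescope
      (fun j => ((descAscShufflesHead j (n - j)).map e).sum) _ n
      (by simp [descAscShuffles_zero_succ])
      fun j hj => ?_]
  · simp [descAscShufflesHead_zero]
  · obtain ⟨k, rfl⟩ : ∃ k, n = j + 1 + k := ⟨n - (j + 1), by omega⟩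
    simp only [show j + 1 + k + 1 - (j + 1) = k + 1 by omega, show j + 1 + k - j = k + 1 by omega,
      show j + 1 + k - (j + 1) = k by omega, descAscShuffles_succ_succ, Multiset.map_add,
      Multiset.sum_add]

section SSym

variable {K A : Type*} [CommSemiring K] [Ring A] [HopfAlgebra K A] {e : List ℕ → A}

lemma comul_range' (hcomul : ∀ w : List ℕ, IsPermList w →
      Coalgebra.comul (R := K) (e w) =
        ∑ i ∈ Finset.range (w.length + 1), e (stw (w.take i)) ⊗ₜ[K] e (stw (w.drop i)))
    (n : ℕ) :
    Coalgebra.comul (R := K) (e (range' 1 n)) =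
      ∑ i ∈ Finset.range (n + 1), e (range' 1 i) ⊗ₜ[K] e (range' 1 (n - i)) := by
  rw [hcomul _ (isPermList_range' n), length_range']
  refine Finset.sum_congr rfl fun i hi => ?_
  rw [take_range'_of_length_ge (by simpa [Nat.lt_succ_iff] using hi), drop_range', stw_range',
    stw_range']

lemma antipode_range'_succ (hone : e [] = 1)
    (hcomul : ∀ w : List ℕ, IsPermList w →
      Coalgebra.comul (R := K) (e w) =
        ∑ i ∈ Finset.range (w.length + 1), e (stw (w.take i)) ⊗ₜ[K] e (stw (w.drop i)))
    (hcounit : ∀ w : List ℕ, IsPermList w →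
      Coalgebra.counit (R := K) (e w) = if w = [] then (1 : K) else 0)
    (n : ℕ) :
    HopfAlgebra.antipode K (e (range' 1 (n + 1))) =
      -∑ i ∈ Finset.range (n + 1),
        HopfAlgebra.antipode K (e (range' 1 i)) * e (range' 1 (n + 1 - i)) := by
  let repr : Coalgebra.Repr K (e (range' 1 (n + 1))) ℕ :=
    { index := Finset.range (n + 2)
      left := fun i => e (range' 1 i)
      right := fun i => e (range' 1 (n + 1 - i))
      eq := (comul_range' hcomul (n + 1)).symm }
  have h := HopfAlgebra.sum_antipode_mul_eq_algebraMap_counit repr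
  rw [hcounit _ (isPermList_range' _), if_neg (by simp), map_zero, Finset.sum_range_succ] at h
  simp only [repr, Nat.sub_self, range'_zero, hone, mul_one] at h
  exact eq_neg_of_add_eq_zero_right h

end SSym

/-- in the Malvenuto–Reutenauer Hopf algebra `SSym`, the antipode
of the identity permutation satisfies `S(12⋯n) = (-1)^n (n(n-1)⋯1)`.  `SSym` is
formalized as a Hopf algebra `A` over a field `K` with a basis-indexing map `e`
on permutations (as one-line words), whose product is given by shifted
shuffles and whose coproduct is given by standardized deconcatenations. -/
theorem ssym_antipode_identity (K : Type) [Field K] (A : Type) [Ring A]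
    [HopfAlgebra K A] (e : List ℕ → A)
    (hone : e [] = 1)
    (hmul : ∀ v w : List ℕ, IsPermList v → IsPermList w →
      e v * e w = ((shuffles v (w.map (· + v.length))).map e).sum)
    (hcomul : ∀ w : List ℕ, IsPermList w →
      Coalgebra.comul (R := K) (e w) =
        ∑ i ∈ Finset.range (w.length + 1),
          e (stw (w.take i)) ⊗ₜ[K] e (stw (w.drop i)))
    (hcounit : ∀ w : List ℕ, IsPermList w →
      Coalgebra.counit (R := K) (e w) = if w = [] then (1 : K) else 0)
    (n : ℕ) :
    HopfAlgebra.antipode (R := K) (e (List.range' 1 n)) =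
      ((-1 : ℤ) ^ n) • e (List.range' 1 n).reverse := by
  induction n using Nat.strong_induction_on with
  | _ n ih =>
  rcases n with _ | n
  · simp [hone]
  have hterm : ∀ i < n + 1, HopfAlgebra.antipode K (e (range' 1 i)) * e (range' 1 (n + 1 - i)) =
      (-1 : ℤ) ^ i • ((descAscShuffles i (n + 1 - i)).map e).sum := fun i hi => by
    rw [ih i hi, smul_mul_assoc, hmul _ _ (isPermList_reverse_range' i) (isPermList_range' _),
      length_reverse, length_range', map_add_right_range', Nat.add_comm 1 i, descAscShuffles]
  rw [antipode_range'_succ hone hcomul hcounit n,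
    Finset.sum_congr rfl fun i hi => hterm i (Finset.mem_range.mp hi),
    sum_range_neg_one_pow_smul_descAscShuffles, pow_succ, mul_smul, neg_one_smul, smul_neg]
end
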